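/- arXiv:2208.13489 — 5 statements merged into one kernel-verified Lean document; each statement's English description precedes it below -/
import Mathlib

section
/- Let r ≥ 3 and k ≥ 2 be integers, and suppose H^r is an (e_i)_{i=0}^T-sequential r-graph with vertex set V(H^r) = A_r^*. Let K be the complete (r+1)-graph with vertex set A_r^*, let v_1^{r+1} be a new vertex, and define the (r+1)-graph H_1^{r+1} = {e ∪ {v_1^{r+1}} : e ∈ H^r} ∪ K on the vertex set A_r^* ∪ {v_1^{r+1}}. Then H_1^{r+1} is (e_i ∪ {v_1^{r+1}})_{i=0}^T-sequential. -/
open Finset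

section Bootstrap

variable {V : Type*} [DecidableEq V]

open Classical in
/-- One step of the `K_{r+1}^r`-bootstrap process in the complete `r`-graph with
vertex set `W`: an `r`-set `e ⊆ W` becomes infected if there is an `(r+1)`-set
`f ⊆ W` such that the copy of `K_{r+1}^r` spanned by `f` has `e` as its unique
edge not in `G`, i.e. `e = F' \ G`. -/
noncomputable def bootStep (r : ℕ) (W : Finset V) (G : Finset (Finset V)) :
    Finset (Finset V) :=
  G ∪ (W.powersetCard r).filter fun e =>
    ∃ f ∈ W.powersetCard (r + 1), f.powersetCard r \ G = {e}

/-- `bootIter r W G₀ i` is the set `G_i` of edges infected after `i` steps. -/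
noncomputable def bootIter (r : ℕ) (W : Finset V) (G : Finset (Finset V)) :
    ℕ → Finset (Finset V)
  | 0 => G
  | i + 1 => bootStep r W (bootIter r W G i)

/-- The running time: the least `i ≥ 0` with `G_{i+1} = G_i`. -/
noncomputable def runTime (r : ℕ) (W : Finset V) (G : Finset (Finset V)) : ℕ :=
  sInf {i | bootIter r W G (i + 1) = bootIter r W G i}

/-- The process started from `G` infects no new edge. -/
def Stationary (r : ℕ) (W : Finset V) (G : Finset (Finset V)) : Prop :=
  bootStep r W G = G

/-- Started from `G₀`, the bootstrap process infects exactly the single new edge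
`e i` at each step `i ∈ [1, T]` and is stationary afterwards (it runs for
exactly `T` steps). -/
def InfectsExactly (r : ℕ) (W : Finset V) (G₀ : Finset (Finset V)) (T : ℕ)
    (e : ℕ → Finset V) : Prop :=
  (∀ i, 1 ≤ i → i ≤ T →
      e i ∉ bootIter r W G₀ (i - 1) ∧
      bootIter r W G₀ i = insert (e i) (bootIter r W G₀ (i - 1))) ∧
  bootIter r W G₀ (T + 1) = bootIter r W G₀ T

/-- `H` is `(e_i)_{i=0}^T`-sequential on the vertex set `W`. -/
def IsSequential (r : ℕ) (W : Finset V) (H : Finset (Finset V)) (T : ℕ)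
    (e : ℕ → Finset V) : Prop :=
  e 0 ∈ H ∧
  (∀ i ≤ T, e i ⊆ W ∧ (e i).card = r) ∧
  InfectsExactly r W H T e ∧
  Stationary r W (H \ {e 0}) ∧
  InfectsExactly r W (insert (e T) H \ {e 0}) T fun i => e (T - i)

end Bootstrap

/-- `T_r(n)`: the maximum over all initially infected `G₀ ⊆ K_n^r` of the
running time of the `K_{r+1}^r`-bootstrap process in `K_n^r`. -/
noncomputable def maxRunTime (r n : ℕ) : ℕ :=
  sSup {t | ∃ G₀ : Finset (Finset (Fin n)),
    G₀ ⊆ (Finset.univ : Finset (Fin n)).powersetCard r ∧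
    runTime r Finset.univ G₀ = t}

/-- The vertex `v_j^i` is encoded as the pair `(i, j)`; `A k i` is the set
`A_i = {v_1^i, …, v_{4k-3}^i}`. -/
def A (k i : ℕ) : Finset (ℕ × ℕ) := (Finset.Icc 1 (4 * k - 3)).image fun j => (i, j)

/-- `A_i^* = A_1 ∪ ⋯ ∪ A_i`. -/
def Astar (k i : ℕ) : Finset (ℕ × ℕ) := (Finset.Icc 1 i).biUnion (A k)


section Aux
variable {V : Type*} [DecidableEq V]

lemma insert_left_inj' {v : V} {a b : Finset V} (ha : v ∉ a) (hb : v ∉ b) :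
    insert v a = insert v b ↔ a = b := by
  constructor
  · intro h
    have h2 := congrArg (fun s => Finset.erase s v) h
    simpa [Finset.erase_insert ha, Finset.erase_insert hb] using h2
  · rintro rfl; rfl

lemma mem_image_insert_iff {v : V} {S : Finset (Finset V)} {x : Finset V}
    (hS : ∀ a ∈ S, v ∉ a) :
    x ∈ S.image (insert v) ↔ v ∈ x ∧ x.erase v ∈ S := by
  simp only [mem_image]
  constructor
  · rintro ⟨a, ha, rfl⟩
    exact ⟨mem_insert_self _ _, by rw [erase_insert (hS a ha)]; exact ha⟩
  · rintro ⟨hvx, hx⟩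
    exact ⟨x.erase v, hx, insert_erase hvx⟩

lemma diff_lift {v : V} {W : Finset V} {r : ℕ} {G : Finset (Finset V)}
    (hv : v ∉ W) (hG : ∀ a ∈ G, a ⊆ W) {g : Finset V} (hgW : g ⊆ W)
    (hgc : g.card = r + 1) :
    (insert v g).powersetCard (r + 1) \ (G.image (insert v) ∪ W.powersetCard (r + 1))
      = (g.powersetCard r \ G).image (insert v) := by
  have hvg : v ∉ g := fun h => hv (hgW h)
  have h1 : g.powersetCard (r + 1) = {g} := by rw [← hgc, powersetCard_self]
  have hpcs : ∀ a ∈ g.powersetCard r, v ∉ a := fun a ha h =>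
    hvg ((mem_powersetCard.1 ha).1 h)
  have hGv : ∀ a ∈ G, v ∉ a := fun a ha h => hv (hG a ha h)
  have hSv : ∀ a ∈ g.powersetCard r \ G, v ∉ a := fun a ha => hpcs a (mem_sdiff.1 ha).1
  rw [powersetCard_succ_insert hvg, h1]
  ext x
  rw [mem_sdiff, mem_union, mem_singleton, mem_union, mem_image_insert_iff hpcs,
    mem_image_insert_iff hGv, mem_image_insert_iff hSv, mem_sdiff]
  constructor
  · rintro ⟨rfl | ⟨hvx, hx⟩, hx2⟩
    · exact absurd (mem_powersetCard.2 ⟨hgW, hgc⟩) (fun h => hx2 (Or.inr h))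
    · exact ⟨hvx, hx, fun h => hx2 (Or.inl ⟨hvx, h⟩)⟩
  · rintro ⟨hvx, hx, hxG⟩
    refine ⟨Or.inr ⟨hvx, hx⟩, ?_⟩
    rintro (⟨-, h⟩ | h)
    · exact hxG h
    · exact hv ((mem_powersetCard.1 h).1 hvx)

lemma image_insert_eq_singleton_iff {v : V} {S : Finset (Finset V)} {x : Finset V}
    (hS : ∀ a ∈ S, v ∉ a) (hx : v ∉ x) :
    S.image (insert v) = {insert v x} ↔ S = {x} := by
  constructor
  · intro h
    rw [eq_singleton_iff_unique_mem]
    have hxS : x ∈ S := by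
      have : insert v x ∈ S.image (insert v) := by rw [h]; exact mem_singleton_self _
      obtain ⟨a, ha, hax⟩ := mem_image.1 this
      rwa [← (insert_left_inj' (hS a ha) hx).1 hax]
    refine ⟨hxS, fun y hy => ?_⟩
    have : insert v y ∈ S.image (insert v) := mem_image_of_mem _ hy
    rw [h, mem_singleton] at this
    exact (insert_left_inj' (hS y hy) hx).1 this
  · rintro rfl; simp

lemma bootStep_lift {v : V} {W : Finset V} {r : ℕ} {G : Finset (Finset V)}
    (hv : v ∉ W) (hG : G ⊆ W.powersetCard r) :
    bootStep (r + 1) (insert v W) (G.image (insert v) ∪ W.powersetCard (r + 1))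
      = (bootStep r W G).image (insert v) ∪ W.powersetCard (r + 1) := by
  classical
  have hGsub : ∀ a ∈ G, a ⊆ W := fun a ha => (mem_powersetCard.1 (hG ha)).1
  unfold bootStep
  rw [image_union]
  ext x
  simp only [mem_union, mem_filter, mem_image]
  have hkey : (x ∈ (insert v W).powersetCard (r + 1) ∧
        ∃ f ∈ (insert v W).powersetCard (r + 2),
          f.powersetCard (r + 1) \ (G.image (insert v) ∪ W.powersetCard (r + 1)) = {x})
      ↔ (∃ a, (a ∈ W.powersetCard r ∧
          ∃ g ∈ W.powersetCard (r + 1), g.powersetCard r \ G = {a}) ∧ insert v a = x) := by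
    constructor
    · rintro ⟨hx1, f, hf, hfeq⟩
      obtain ⟨hfW, hfc⟩ := mem_powersetCard.1 hf
      by_cases hvf : v ∈ f
      · set g := f.erase v with hg
        have hgW : g ⊆ W := by
          intro a ha
          rcases mem_insert.1 (hfW (mem_of_mem_erase ha)) with rfl | h
          · exact absurd ha (notMem_erase _ _)
          · exact h
        have hgc : g.card = r + 1 := by
          rw [hg, card_erase_of_mem hvf, hfc]; omega
        have hfg : f = insert v g := by rw [hg, insert_erase hvf]
        rw [hfg, diff_lift hv hGsub hgW hgc] at hfeq
        have hvx : v ∈ x := by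
          have : x ∈ (g.powersetCard r \ G).image (insert v) := by
            rw [hfeq]; exact mem_singleton_self _
          obtain ⟨a, _, rfl⟩ := mem_image.1 this
          exact mem_insert_self _ _
        have hxW : x.erase v ⊆ W := by
          intro a ha
          rcases mem_insert.1 ((mem_powersetCard.1 hx1).1 (mem_of_mem_erase ha)) with rfl | h
          · exact absurd ha (notMem_erase _ _)
          · exact h
        have hxc : (x.erase v).card = r := by
          have h2 : (x.erase v).card = x.card - 1 := card_erase_of_mem hvx
          rw [(mem_powersetCard.1 hx1).2] at h2
          omega
        have hxv : v ∉ x.erase v := notMem_erase _ _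
        have hxe : x = insert v (x.erase v) := (insert_erase hvx).symm
        have hSv : ∀ a ∈ g.powersetCard r \ G, v ∉ a := fun a ha h =>
          hv (hgW ((mem_powersetCard.1 (mem_sdiff.1 ha).1).1 h))
        rw [hxe] at hfeq
        have hdiff : g.powersetCard r \ G = {x.erase v} :=
          (image_insert_eq_singleton_iff hSv hxv).1 hfeq
        exact ⟨x.erase v, ⟨mem_powersetCard.2 ⟨hxW, hxc⟩,
          g, mem_powersetCard.2 ⟨hgW, hgc⟩, hdiff⟩, hxe.symm⟩
      · exfalso
        have hfW' : f ⊆ W := by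
          intro a ha
          rcases mem_insert.1 (hfW ha) with rfl | h
          · exact absurd ha hvf
          · exact h
        have hempty : f.powersetCard (r + 1) \ (G.image (insert v) ∪ W.powersetCard (r + 1))
            = ∅ := by
          rw [sdiff_eq_empty_iff_subset]
          intro a ha
          obtain ⟨haf, hac⟩ := mem_powersetCard.1 ha
          exact mem_union_right _ (mem_powersetCard.2 ⟨haf.trans hfW', hac⟩)
        rw [hempty] at hfeq
        exact (singleton_ne_empty x) hfeq.symm
    · rintro ⟨h, ⟨hh1, g, hg, hgeq⟩, rfl⟩
      obtain ⟨hhW, hhc⟩ := mem_powersetCard.1 hh1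
      obtain ⟨hgW, hgc⟩ := mem_powersetCard.1 hg
      have hvh : v ∉ h := fun hc => hv (hhW hc)
      have hvg : v ∉ g := fun hc => hv (hgW hc)
      refine ⟨mem_powersetCard.2 ⟨insert_subset_insert _ hhW,
          by rw [card_insert_of_notMem hvh, hhc]⟩,
        insert v g, mem_powersetCard.2 ⟨insert_subset_insert _ hgW,
          by rw [card_insert_of_notMem hvg, hgc]⟩, ?_⟩
      rw [diff_lift hv hGsub hgW hgc, hgeq, image_singleton]
  constructor
  · rintro ((h | h) | h)
    · exact Or.inl (Or.inl h)
    · exact Or.inr h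
    · exact Or.inl (Or.inr (hkey.1 h))
  · rintro ((h | h) | h)
    · exact Or.inl (Or.inl h)
    · exact Or.inr (hkey.2 h)
    · exact Or.inl (Or.inr h)


lemma bootStep_subset_pcs {r : ℕ} {W : Finset V} {G : Finset (Finset V)}
    (hG : G ⊆ W.powersetCard r) : bootStep r W G ⊆ W.powersetCard r := by
  classical
  intro x hx
  simp only [bootStep, mem_union, mem_filter] at hx
  rcases hx with h | h
  · exact hG h
  · exact h.1

lemma bootIter_subset_pcs {r : ℕ} {W : Finset V} {G : Finset (Finset V)}
    (hG : G ⊆ W.powersetCard r) (i : ℕ) : bootIter r W G i ⊆ W.powersetCard r := by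
  induction i with
  | zero => exact hG
  | succ i ih => exact bootStep_subset_pcs ih

lemma bootIter_lift {v : V} {W : Finset V} {r : ℕ} {G : Finset (Finset V)}
    (hv : v ∉ W) (hG : G ⊆ W.powersetCard r) (i : ℕ) :
    bootIter (r + 1) (insert v W) (G.image (insert v) ∪ W.powersetCard (r + 1)) i
      = (bootIter r W G i).image (insert v) ∪ W.powersetCard (r + 1) := by
  induction i with
  | zero => rfl
  | succ i ih =>
    show bootStep (r + 1) (insert v W) _
      = (bootStep r W (bootIter r W G i)).image (insert v) ∪ _
    rw [ih, bootStep_lift hv (bootIter_subset_pcs hG i)]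

lemma mem_lift_iff {v : V} {W : Finset V} {r : ℕ} {S : Finset (Finset V)}
    (hv : v ∉ W) (hS : S ⊆ W.powersetCard r) {x : Finset V} (hx : x ⊆ W) :
    insert v x ∈ S.image (insert v) ∪ W.powersetCard (r + 1) ↔ x ∈ S := by
  have hvx : v ∉ x := fun h => hv (hx h)
  rw [mem_union,
    mem_image_insert_iff (fun a ha h => hv ((mem_powersetCard.1 (hS ha)).1 h)),
    erase_insert hvx]
  constructor
  · rintro (⟨-, h⟩ | h)
    · exact h
    · exact absurd ((mem_powersetCard.1 h).1 (mem_insert_self _ _)) hv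
  · intro h
    exact Or.inl ⟨mem_insert_self _ _, h⟩

lemma infectsExactly_lift {v : V} {W : Finset V} {r T : ℕ} {G : Finset (Finset V)}
    {e : ℕ → Finset V} (hv : v ∉ W) (hG : G ⊆ W.powersetCard r)
    (he : ∀ i ≤ T, e i ⊆ W) (h : InfectsExactly r W G T e) :
    InfectsExactly (r + 1) (insert v W) (G.image (insert v) ∪ W.powersetCard (r + 1)) T
      (fun i => insert v (e i)) := by
  obtain ⟨h1, h2⟩ := h
  constructor
  · intro i hi1 hiT
    obtain ⟨hnot, heq⟩ := h1 i hi1 hiT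
    constructor
    · show insert v (e i) ∉ _
      rw [bootIter_lift hv hG, mem_lift_iff hv (bootIter_subset_pcs hG _) (he i hiT)]
      exact hnot
    · show _ = insert (insert v (e i)) _
      rw [bootIter_lift hv hG, bootIter_lift hv hG, heq, image_insert, insert_union]
  · rw [bootIter_lift hv hG, bootIter_lift hv hG, h2]

lemma stationary_lift {v : V} {W : Finset V} {r : ℕ} {G : Finset (Finset V)}
    (hv : v ∉ W) (hG : G ⊆ W.powersetCard r) (h : Stationary r W G) :
    Stationary (r + 1) (insert v W) (G.image (insert v) ∪ W.powersetCard (r + 1)) := by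
  unfold Stationary at *
  rw [bootStep_lift hv hG, h]

lemma sdiff_singleton_lift {v : V} {W : Finset V} {r : ℕ} {H : Finset (Finset V)}
    {e0 : Finset V} (hv : v ∉ W) (hH : ∀ a ∈ H, a ⊆ W) (he0 : e0 ⊆ W) :
    (H.image (insert v) ∪ W.powersetCard (r + 1)) \ {insert v e0}
      = (H \ {e0}).image (insert v) ∪ W.powersetCard (r + 1) := by
  have hv0 : v ∉ e0 := fun h => hv (he0 h)
  have hHv : ∀ a ∈ H, v ∉ a := fun a ha h => hv (hH a ha h)
  have hH'v : ∀ a ∈ H \ {e0}, v ∉ a := fun a ha => hHv a (mem_sdiff.1 ha).1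
  ext x
  rw [mem_sdiff, mem_union, mem_union, mem_image_insert_iff hHv,
    mem_image_insert_iff hH'v, mem_singleton]
  constructor
  · rintro ⟨⟨hvx, hx⟩ | hx, hne⟩
    · refine Or.inl ⟨hvx, mem_sdiff.2 ⟨hx, ?_⟩⟩
      rw [mem_singleton]
      intro h
      exact hne (by rw [← h, insert_erase hvx])
    · exact Or.inr hx
  · rintro (⟨hvx, hx⟩ | hx)
    · obtain ⟨hx1, hx2⟩ := mem_sdiff.1 hx
      rw [mem_singleton] at hx2
      refine ⟨Or.inl ⟨hvx, hx1⟩, fun h => hx2 ?_⟩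
      rw [h, erase_insert hv0]
    · refine ⟨Or.inr hx, ?_⟩
      rintro rfl
      exact hv ((mem_powersetCard.1 hx).1 (mem_insert_self _ _))

end Aux

/-- dimension lifting: if `H^r` on `A_r^*` is
`(e_i)_{i=0}^T`-sequential, then the `(r+1)`-graph
`H₁^{r+1} = {e ∪ {v_1^{r+1}} : e ∈ H^r} ∪ K`, where `K` is the complete
`(r+1)`-graph on `A_r^*`, is `(e_i ∪ {v_1^{r+1}})_{i=0}^T`-sequential on
`A_r^* ∪ {v_1^{r+1}}`. -/
theorem stmt5 (r k T : ℕ) (hr : 3 ≤ r) (hk : 2 ≤ k)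
    (H : Finset (Finset (ℕ × ℕ))) (e : ℕ → Finset (ℕ × ℕ))
    (hHedges : H ⊆ (Astar k r).powersetCard r)
    (hHvertices : ∀ x ∈ Astar k r, ∃ f ∈ H, x ∈ f)
    (hseq : IsSequential r (Astar k r) H T e) :
    IsSequential (r + 1) (Astar k r ∪ {((r + 1 : ℕ), (1 : ℕ))})
      ((H.image fun f => insert ((r + 1 : ℕ), (1 : ℕ)) f) ∪
        (Astar k r).powersetCard (r + 1))
      T (fun i => insert ((r + 1 : ℕ), (1 : ℕ)) (e i)) := by
  classical
  have hvW : ((r + 1 : ℕ), (1 : ℕ)) ∉ Astar k r := by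
    intro hmem
    simp only [Astar, mem_biUnion, A, mem_image, mem_Icc, Prod.mk.injEq] at hmem
    obtain ⟨i, hi, j, hj, hij1, hij2⟩ := hmem
    omega
  have hWeq : Astar k r ∪ {((r + 1 : ℕ), (1 : ℕ))}
      = insert ((r + 1 : ℕ), (1 : ℕ)) (Astar k r) := by
    rw [union_comm, ← insert_eq]
  obtain ⟨he0, hedges, hinf, hstat, hrev⟩ := hseq
  have hHsub : ∀ a ∈ H, a ⊆ Astar k r := fun a ha => (mem_powersetCard.1 (hHedges ha)).1
  have he0W : e 0 ⊆ Astar k r := (hedges 0 (Nat.zero_le T)).1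
  have heTW : e T ⊆ Astar k r := (hedges T le_rfl).1
  have heTc : (e T).card = r := (hedges T le_rfl).2
  rw [hWeq]
  refine ⟨mem_union_left _ (mem_image_of_mem _ he0), ?_, ?_, ?_, ?_⟩
  · intro i hi
    obtain ⟨hiW, hic⟩ := hedges i hi
    have hvi : ((r + 1 : ℕ), (1 : ℕ)) ∉ e i := fun h => hvW (hiW h)
    exact ⟨insert_subset_insert _ hiW, by rw [card_insert_of_notMem hvi, hic]⟩
  · exact infectsExactly_lift hvW hHedges (fun i hi => (hedges i hi).1) hinf
  · show Stationary (r + 1) _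
      ((H.image (insert ((r + 1 : ℕ), (1 : ℕ))) ∪ (Astar k r).powersetCard (r + 1))
        \ {insert ((r + 1 : ℕ), (1 : ℕ)) (e 0)})
    rw [sdiff_singleton_lift hvW hHsub he0W]
    exact stationary_lift hvW (sdiff_subset.trans hHedges) hstat
  · show InfectsExactly (r + 1) _
      ((insert (insert ((r + 1 : ℕ), (1 : ℕ)) (e T))
        (H.image (insert ((r + 1 : ℕ), (1 : ℕ))) ∪ (Astar k r).powersetCard (r + 1)))
        \ {insert ((r + 1 : ℕ), (1 : ℕ)) (e 0)}) T
      (fun i => insert ((r + 1 : ℕ), (1 : ℕ)) (e (T - i)))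
    have hins : insert (insert ((r + 1 : ℕ), (1 : ℕ)) (e T))
        (H.image (insert ((r + 1 : ℕ), (1 : ℕ))) ∪ (Astar k r).powersetCard (r + 1))
        = (insert (e T) H).image (insert ((r + 1 : ℕ), (1 : ℕ)))
          ∪ (Astar k r).powersetCard (r + 1) := by
      rw [image_insert, insert_union]
    have hH'sub : ∀ a ∈ insert (e T) H, a ⊆ Astar k r := by
      intro a ha
      rcases mem_insert.1 ha with rfl | h
      · exact heTW
      · exact hHsub a h
    rw [hins, sdiff_singleton_lift hvW hH'sub he0W]
    exact infectsExactly_lift hvW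
      (sdiff_subset.trans (insert_subset (mem_powersetCard.2 ⟨heTW, heTc⟩) hHedges))
      (fun i hi => (hedges (T - i) (Nat.sub_le T i)).1) hrev
end

section
/- Let r ≥ 3 be an integer, let W be a finite vertex set, let v be a vertex not in W, and let K be the complete (r+1)-graph with vertex set W. Fix any (r+1)-graph H' ⊇ K with vertex set W ∪ {v}. Let (H'_i)_{i≥0} be the F_{r+1}-bootstrap process on the complete (r+1)-graph on W ∪ {v} with initially infected graph H'_0 = H', and let (H''_i)_{i≥0} be the F_r-bootstrap process on the complete r-graph on W with initially infected r-graph H''_0 = H'' = {e \ {v} : v ∈ e ∈ H'}. Then for every i ≥ 0, H''_i = {e \ {v} : e ∈ H'_i \ K}. -/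
open Finset

section AuxProof
variable {V : Type*} [DecidableEq V]

lemma mem_proj {r : ℕ} {W : Finset V} {v : V} (hv : v ∉ W)
    {G' : Finset (Finset V)}
    (hG : G' ⊆ (insert v W).powersetCard (r + 1)) {e : Finset V} :
    (e ∈ (G' \ W.powersetCard (r + 1)).image fun f => f.erase v) ↔
      e ⊆ W ∧ insert v e ∈ G' := by
  simp only [mem_image, mem_sdiff, mem_powersetCard]
  constructor
  · rintro ⟨e', ⟨he'G, hKc⟩, rfl⟩
    obtain ⟨hsub, hcard⟩ := mem_powersetCard.1 (hG he'G)
    have hve' : v ∈ e' := by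
      by_contra h
      exact hKc ⟨fun x hx => (mem_insert.1 (hsub hx)).resolve_left
        (by rintro rfl; exact h hx), hcard⟩
    refine ⟨fun x hx => ?_, by rwa [insert_erase hve']⟩
    obtain ⟨hxv, hxe⟩ := mem_erase.1 hx
    exact (mem_insert.1 (hsub hxe)).resolve_left hxv
  · rintro ⟨hsub, hmem⟩
    exact ⟨insert v e, ⟨hmem, fun h => hv (h.1 (mem_insert_self v e))⟩,
      erase_insert fun h => hv (hsub h)⟩

lemma frame_equiv {r : ℕ} {W : Finset V} {v : V} (hv : v ∉ W)
    {G' : Finset (Finset V)} (hKs : W.powersetCard (r + 1) ⊆ G')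
    (hG : G' ⊆ (insert v W).powersetCard (r + 1)) {e : Finset V}
    (heW : e ⊆ W) (hec : e.card = r) :
    (∃ f ∈ W.powersetCard (r + 1),
        f.powersetCard r \ ((G' \ W.powersetCard (r + 1)).image fun g => g.erase v) = {e}) ↔
      ∃ f' ∈ (insert v W).powersetCard (r + 2),
        f'.powersetCard (r + 1) \ G' = {insert v e} := by
  have hve : v ∉ e := fun h => hv (heW h)
  constructor
  · rintro ⟨f, hf, hyp⟩
    obtain ⟨hfW, hfc⟩ := mem_powersetCard.1 hf
    have hvf : v ∉ f := fun h => hv (hfW h)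
    refine ⟨insert v f, mem_powersetCard.2 ⟨insert_subset_insert _ hfW,
      by rw [card_insert_of_notMem hvf, hfc]⟩, ?_⟩
    ext g'
    simp only [mem_sdiff, mem_powersetCard, mem_singleton]
    constructor
    · rintro ⟨⟨hg'sub, hg'c⟩, hg'G⟩
      by_cases hvg' : v ∈ g'
      · set g := g'.erase v with hg
        have hgf : g ⊆ f := fun x hx => by
          obtain ⟨hxv, hxe⟩ := mem_erase.1 hx
          exact (mem_insert.1 (hg'sub hxe)).resolve_left hxv
        have hgc : g.card = r := by
          rw [hg, card_erase_of_mem hvg', hg'c]; omega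
        have hg' : g' = insert v g := (insert_erase hvg').symm
        have hgG : g ∉ (G' \ W.powersetCard (r + 1)).image fun t => t.erase v := by
          rw [mem_proj hv hG]
          exact fun h => hg'G (hg' ▸ h.2)
        have : g ∈ f.powersetCard r \
            ((G' \ W.powersetCard (r + 1)).image fun t => t.erase v) :=
          mem_sdiff.2 ⟨mem_powersetCard.2 ⟨hgf, hgc⟩, hgG⟩
        rw [hyp, mem_singleton] at this
        rw [hg', this]
      · have hg'f : g' ⊆ f := fun x hx =>
          (mem_insert.1 (hg'sub hx)).resolve_left (by rintro rfl; exact hvg' hx)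
        have : g' = f := eq_of_subset_of_card_le hg'f (by rw [hfc, hg'c])
        rw [this] at hg'G
        exact absurd (hKs hf) hg'G
    · rintro rfl
      have heG : e ∉ (G' \ W.powersetCard (r + 1)).image fun t => t.erase v := by
        have : e ∈ f.powersetCard r \
            ((G' \ W.powersetCard (r + 1)).image fun t => t.erase v) := by
          rw [hyp]; exact mem_singleton_self e
        exact (mem_sdiff.1 this).2
      have hef : e ⊆ f := by
        have : e ∈ f.powersetCard r := by
          have h2 : e ∈ f.powersetCard r \
              ((G' \ W.powersetCard (r + 1)).image fun t => t.erase v) := by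
            rw [hyp]; exact mem_singleton_self e
          exact (mem_sdiff.1 h2).1
        exact (mem_powersetCard.1 this).1
      refine ⟨⟨insert_subset_insert _ hef,
        by rw [card_insert_of_notMem hve, hec]⟩, fun h => ?_⟩
      exact heG ((mem_proj hv hG).2 ⟨heW, h⟩)
  · rintro ⟨f', hf', hyp⟩
    obtain ⟨hf'sub, hf'c⟩ := mem_powersetCard.1 hf'
    have hvef' : insert v e ⊆ f' ∧ insert v e ∉ G' := by
      have : insert v e ∈ f'.powersetCard (r + 1) \ G' := by
        rw [hyp]; exact mem_singleton_self _
      exact ⟨(mem_powersetCard.1 (mem_sdiff.1 this).1).1, (mem_sdiff.1 this).2⟩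
    have hvf' : v ∈ f' := hvef'.1 (mem_insert_self v e)
    set f := f'.erase v with hfdef
    have hfW : f ⊆ W := fun x hx => by
      obtain ⟨hxv, hxf⟩ := mem_erase.1 hx
      exact (mem_insert.1 (hf'sub hxf)).resolve_left hxv
    have hvf : v ∉ f := notMem_erase _ _
    have hfc : f.card = r + 1 := by
      rw [hfdef, card_erase_of_mem hvf', hf'c]; omega
    refine ⟨f, mem_powersetCard.2 ⟨hfW, hfc⟩, ?_⟩
    ext g
    simp only [mem_sdiff, mem_powersetCard, mem_singleton]
    constructor
    · rintro ⟨⟨hgf, hgc⟩, hgG⟩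
      have hvg : v ∉ g := fun h => hvf (hgf h)
      have h1 : insert v g ⊆ f' := insert_subset hvf' (hgf.trans (erase_subset _ _))
      have h2 : (insert v g).card = r + 1 := by rw [card_insert_of_notMem hvg, hgc]
      have h3 : insert v g ∉ G' := fun h => hgG ((mem_proj hv hG).2 ⟨hgf.trans hfW, h⟩)
      have : insert v g ∈ f'.powersetCard (r + 1) \ G' :=
        mem_sdiff.2 ⟨mem_powersetCard.2 ⟨h1, h2⟩, h3⟩
      rw [hyp, mem_singleton] at this
      have := congrArg (fun s => s.erase v) this
      simpa [erase_insert hvg, erase_insert hve] using this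
    · rintro rfl
      have hef : g ⊆ f := fun x hx => mem_erase.2
        ⟨fun hxv => hve (hxv ▸ hx), hvef'.1 (mem_insert_of_mem hx)⟩
      exact ⟨⟨hef, hec⟩, fun h => hvef'.2 ((mem_proj hv hG).1 h).2⟩

lemma step_proj {r : ℕ} {W : Finset V} {v : V} (hv : v ∉ W)
    {G' : Finset (Finset V)} (hKs : W.powersetCard (r + 1) ⊆ G')
    (hG : G' ⊆ (insert v W).powersetCard (r + 1)) :
    bootStep r W ((G' \ W.powersetCard (r + 1)).image fun f => f.erase v) =
      (bootStep (r + 1) (insert v W) G' \ W.powersetCard (r + 1)).image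
        fun f => f.erase v := by
  have hG2 : bootStep (r + 1) (insert v W) G' ⊆ (insert v W).powersetCard (r + 1) := by
    intro x hx
    simp only [bootStep, mem_union, mem_filter] at hx
    exact hx.elim (fun h => hG h) fun h => h.1
  ext e
  rw [mem_proj hv hG2]
  simp only [bootStep, mem_union, mem_filter]
  constructor
  · rintro (h | ⟨he, hex⟩)
    · rw [mem_proj hv hG] at h
      exact ⟨h.1, Or.inl h.2⟩
    · obtain ⟨heW, hec⟩ := mem_powersetCard.1 he
      have hve : v ∉ e := fun h => hv (heW h)
      refine ⟨heW, Or.inr ⟨mem_powersetCard.2 ⟨insert_subset_insert _ heW,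
        by rw [card_insert_of_notMem hve, hec]⟩,
        (frame_equiv hv hKs hG heW hec).1 hex⟩⟩
  · rintro ⟨heW, h | ⟨hmem, hex⟩⟩
    · exact Or.inl ((mem_proj hv hG).2 ⟨heW, h⟩)
    · have hve : v ∉ e := fun h => hv (heW h)
      have hec : e.card = r := by
        have := (mem_powersetCard.1 hmem).2
        rw [card_insert_of_notMem hve] at this
        omega
      exact Or.inr ⟨mem_powersetCard.2 ⟨heW, hec⟩,
        (frame_equiv hv hKs hG heW hec).2 hex⟩

end AuxProof

/-- projection of the lifted process: with `K` the complete
`(r+1)`-graph on `W`, `v ∉ W`, `K ⊆ H'` an `(r+1)`-graph on `W ∪ {v}`, the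
`F_{r+1}`-process `(H'_i)` started from `H'` and the `F_r`-process `(H''_i)`
started from `H'' = {e \ {v} : v ∈ e ∈ H'}` satisfy
`H''_i = {e \ {v} : e ∈ H'_i \ K}` for all `i`. -/
theorem stmt6 {V : Type*} [DecidableEq V] (r : ℕ) (hr : 3 ≤ r)
    (W : Finset V) (v : V) (hv : v ∉ W) (H' : Finset (Finset V))
    (hK : W.powersetCard (r + 1) ⊆ H')
    (hH' : H' ⊆ (insert v W).powersetCard (r + 1)) :
    ∀ i : ℕ,
      bootIter r W ((H'.filter fun f => v ∈ f).image fun f => f.erase v) i =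
        ((bootIter (r + 1) (insert v W) H' i) \ W.powersetCard (r + 1)).image
          fun f => f.erase v := by
  have h0 : (H'.filter fun f => v ∈ f) = H' \ W.powersetCard (r + 1) := by
    ext e
    simp only [mem_filter, mem_sdiff]
    refine and_congr_right fun he => ?_
    obtain ⟨hsub, hcard⟩ := mem_powersetCard.1 (hH' he)
    constructor
    · intro hve h
      exact hv ((mem_powersetCard.1 h).1 hve)
    · intro h
      by_contra hve
      exact h (mem_powersetCard.2 ⟨fun x hx => (mem_insert.1 (hsub hx)).resolve_left
        (by rintro rfl; exact hve hx), hcard⟩)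
  intro i
  rw [h0]
  induction i with
  | zero => rfl
  | succ i ih =>
      have hKi : W.powersetCard (r + 1) ⊆ bootIter (r + 1) (insert v W) H' i ∧
          bootIter (r + 1) (insert v W) H' i ⊆ (insert v W).powersetCard (r + 1) := by
        clear ih
        induction i with
        | zero => exact ⟨hK, hH'⟩
        | succ j ihj =>
            refine ⟨ihj.1.trans ?_, ?_⟩
            · simp only [bootIter, bootStep]
              exact subset_union_left
            · intro x hx
              simp only [bootIter, bootStep, mem_union, mem_filter] at hx
              exact hx.elim (fun h => ihj.2 h) fun h => h.1
      simp only [bootIter]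
      rw [ih, step_proj hv hKi.1 hKi.2]
end

section
/- Let k ≥ 2 be an integer. With the edge sets ℰ and ℱ defined as in the context on the vertex set A_2^* ∪ {v_1^3}, the 3-graph ℰ ∪ ℱ contains no 3 edges whose union has a total of at most 4 vertices. -/
open Finset

/-- The edge set `ℰ = ℰ_1 ∪ ⋯ ∪ ℰ_{k-1}`, where
`ℰ_i = ℰ_{1,i} ∪ ℰ_{2,i} ∪ ℰ_{3,i} ∪ ℰ_{4,i}` as in the paper; the vertex
`v_j^l` is encoded as the pair `(l, j)`. -/
def calE (k : ℕ) : Finset (Finset (ℕ × ℕ)) :=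
  (Finset.Icc 1 (k - 1)).biUnion fun i =>
    ((Finset.Icc (2 * i - 1) (4 * k - 2 - 2 * i)).image fun j =>
      ({((1 : ℕ), 2 * i - 1), ((2 : ℕ), j), ((2 : ℕ), j + 1)} : Finset (ℕ × ℕ))) ∪
    ((Finset.Icc (2 * i - 1) (4 * k - 2 - 2 * i)).image fun j =>
      ({((1 : ℕ), j), ((1 : ℕ), j + 1), ((2 : ℕ), 4 * k - 1 - 2 * i)} : Finset (ℕ × ℕ))) ∪
    ((Finset.Icc (2 * i + 1) (4 * k - 2 - 2 * i)).image fun j =>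
      ({((1 : ℕ), 4 * k - 1 - 2 * i), ((2 : ℕ), j), ((2 : ℕ), j + 1)} : Finset (ℕ × ℕ))) ∪
    ((Finset.Icc (2 * i + 1) (4 * k - 2 - 2 * i)).image fun j =>
      ({((1 : ℕ), j), ((1 : ℕ), j + 1), ((2 : ℕ), 2 * i + 1)} : Finset (ℕ × ℕ)))

/-- The edge set `ℱ` of all triples consisting of `v_1^3` and two consecutive
vertices of one of the two paths `v_1^l v_2^l ⋯ v_{4k-3}^l`, `l ∈ {1, 2}`. -/
def calF (k : ℕ) : Finset (Finset (ℕ × ℕ)) :=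
  (Finset.Icc 1 (4 * k - 4)).biUnion fun j =>
    (Finset.Icc 1 2).image fun l =>
      ({(l, j), (l, j + 1), ((3 : ℕ), (1 : ℕ))} : Finset (ℕ × ℕ))

/-- The common structure of all edges of `ℰ ∪ ℱ`: a pair of consecutive
vertices on a path `l ∈ {1,2}` plus a single vertex with odd index on a
different "path" `m ∈ {1,2,3}`. -/
def GoodEdge (f : Finset (ℕ × ℕ)) : Prop :=
  ∃ l j m t, f = ({(l, j), (l, j + 1), (m, t)} : Finset (ℕ × ℕ)) ∧
    1 ≤ l ∧ l ≤ 2 ∧ 1 ≤ m ∧ m ≤ 3 ∧ l ≠ m ∧ Odd t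

lemma goodEdge_of_mem {k : ℕ} (hk : 2 ≤ k) {f : Finset (ℕ × ℕ)}
    (hf : f ∈ calE k ∪ calF k) : GoodEdge f := by
  rw [Finset.mem_union] at hf
  rcases hf with hf | hf
  · simp only [calE, Finset.mem_biUnion, Finset.mem_union, Finset.mem_image,
      Finset.mem_Icc] at hf
    obtain ⟨i, ⟨hi1, hi2⟩, h⟩ := hf
    rcases h with ((⟨j, hj, rfl⟩ | ⟨j, hj, rfl⟩) | ⟨j, hj, rfl⟩) | ⟨j, hj, rfl⟩
    · exact ⟨2, j, 1, 2 * i - 1, by ext x; simp; tauto, by omega, by omega, by omega,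
        by omega, by omega, ⟨i - 1, by omega⟩⟩
    · exact ⟨1, j, 2, 4 * k - 1 - 2 * i, rfl, by omega, by omega, by omega,
        by omega, by omega, ⟨2 * k - 1 - i, by omega⟩⟩
    · exact ⟨2, j, 1, 4 * k - 1 - 2 * i, by ext x; simp; tauto, by omega, by omega, by omega,
        by omega, by omega, ⟨2 * k - 1 - i, by omega⟩⟩
    · exact ⟨1, j, 2, 2 * i + 1, rfl, by omega, by omega, by omega,
        by omega, by omega, ⟨i, by omega⟩⟩
  · simp only [calF, Finset.mem_biUnion, Finset.mem_image, Finset.mem_Icc] at hf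
    obtain ⟨j, hj, l, hl, rfl⟩ := hf
    exact ⟨l, j, 3, 1, rfl, by omega, by omega, by omega, by omega, by omega,
      ⟨0, by omega⟩⟩

namespace GoodEdge

variable {f : Finset (ℕ × ℕ)}

lemma card3 (h : GoodEdge f) : f.card = 3 := by
  obtain ⟨l, j, m, t, rfl, h1, h2, h3, h4, h5, -⟩ := h
  refine Finset.card_eq_three.mpr ⟨(l, j), (l, j + 1), (m, t), ?_, ?_, ?_, rfl⟩ <;>
    simp [Prod.ext_iff] <;> omega

lemma uniqEven (h : GoodEdge f) {u v : ℕ × ℕ} (hu : u ∈ f) (hv : v ∈ f)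
    (heu : Even u.2) (hev : Even v.2) : u = v := by
  obtain ⟨l, j, m, t, rfl, h1, h2, h3, h4, h5, ht⟩ := h
  simp only [Finset.mem_insert, Finset.mem_singleton] at hu hv
  rcases hu with rfl | rfl | rfl <;> rcases hv with rfl | rfl | rfl <;>
    simp_all [Nat.even_iff, Nat.odd_iff] <;> omega

lemma exEven (h : GoodEdge f) : ∃ u ∈ f, Even u.2 := by
  obtain ⟨l, j, m, t, rfl, h1, h2, h3, h4, h5, ht⟩ := h
  rcases Nat.even_or_odd j with hj | hj
  · exact ⟨(l, j), by simp, hj⟩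
  · exact ⟨(l, j + 1), by simp, by simpa [Nat.even_add_one, Nat.not_even_iff_odd] using hj⟩

lemma oddNe (h : GoodEdge f) {u v : ℕ × ℕ} (hu : u ∈ f) (hv : v ∈ f)
    (hou : Odd u.2) (hov : Odd v.2) (hne : u ≠ v) : u.1 ≠ v.1 := by
  obtain ⟨l, j, m, t, rfl, h1, h2, h3, h4, h5, ht⟩ := h
  simp only [Finset.mem_insert, Finset.mem_singleton] at hu hv
  rcases hu with rfl | rfl | rfl <;> rcases hv with rfl | rfl | rfl <;>
    simp_all [Nat.odd_iff, Prod.ext_iff] <;> omega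

lemma coordRange (h : GoodEdge f) {u : ℕ × ℕ} (hu : u ∈ f) :
    1 ≤ u.1 ∧ u.1 ≤ 3 := by
  obtain ⟨l, j, m, t, rfl, h1, h2, h3, h4, h5, ht⟩ := h
  simp only [Finset.mem_insert, Finset.mem_singleton] at hu
  rcases hu with rfl | rfl | rfl <;> simp <;> omega

lemma three (h : GoodEdge f) {u a b : ℕ × ℕ} (hu : u ∈ f) (hu3 : u.1 = 3)
    (ha : a ∈ f) (hb : b ∈ f) (hau : a ≠ u) (hbu : b ≠ u) : a.1 = b.1 := by
  obtain ⟨l, j, m, t, rfl, h1, h2, h3, h4, h5, ht⟩ := h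
  simp only [Finset.mem_insert, Finset.mem_singleton] at hu ha hb
  rcases hu with rfl | rfl | rfl <;> rcases ha with rfl | rfl | rfl <;>
    rcases hb with rfl | rfl | rfl <;> simp_all [Prod.ext_iff] <;> omega

lemma oddOfNeEven (h : GoodEdge f) {u e : ℕ × ℕ} (hu : u ∈ f) (he : e ∈ f)
    (hee : Even e.2) (hne : u ≠ e) : Odd u.2 := by
  rcases Nat.even_or_odd u.2 with heu | hou
  · exact absurd (h.uniqEven hu he heu hee) hne
  · exact hou

end GoodEdge

lemma goodEdge_key {f₁ f₂ f₃ : Finset (ℕ × ℕ)} (h₁ : GoodEdge f₁)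
    (h₂ : GoodEdge f₂) (h₃ : GoodEdge f₃) (h12 : f₁ ≠ f₂) (h13 : f₁ ≠ f₃)
    (h23 : f₂ ≠ f₃) (hcard : (f₁ ∪ f₂ ∪ f₃).card ≤ 4) : False := by
  set S := f₁ ∪ f₂ ∪ f₃ with hS
  have hsub1 : f₁ ⊆ S := (Finset.subset_union_left.trans Finset.subset_union_left)
  have hsub2 : f₂ ⊆ S := (Finset.subset_union_right.trans Finset.subset_union_left)
  have hsub3 : f₃ ⊆ S := Finset.subset_union_right
  have hS3 : 3 ≤ S.card := h₁.card3 ▸ Finset.card_le_card hsub1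
  have hS4 : S.card = 4 := by
    rcases (by omega : S.card = 3 ∨ S.card = 4) with h | h
    · exfalso
      have c1 := h₁.card3
      have c2 := h₂.card3
      have e1 : f₁ = S := Finset.eq_of_subset_of_card_le hsub1 (by omega)
      have e2 : f₂ = S := Finset.eq_of_subset_of_card_le hsub2 (by omega)
      exact h12 (e1.trans e2.symm)
    · exact h
  -- the omitted vertices
  have hv : ∀ (f : Finset (ℕ × ℕ)), GoodEdge f → f ⊆ S →
      ∃ v, v ∈ S ∧ v ∉ f ∧ ∀ u ∈ S, u ≠ v → u ∈ f := by
    intro f hf hsub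
    have hc : (S \ f).card = 1 := by
      rw [Finset.card_sdiff_of_subset hsub, hS4, hf.card3]
    obtain ⟨v, hveq⟩ := Finset.card_eq_one.mp hc
    have hv1 : v ∈ S \ f := hveq ▸ Finset.mem_singleton_self v
    rw [Finset.mem_sdiff] at hv1
    refine ⟨v, hv1.1, hv1.2, fun u hu hne => ?_⟩
    by_contra hnf
    have : u ∈ S \ f := Finset.mem_sdiff.mpr ⟨hu, hnf⟩
    rw [hveq, Finset.mem_singleton] at this
    exact hne this
  obtain ⟨v₁, hv₁S, hv₁n, hv₁m⟩ := hv f₁ h₁ hsub1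
  obtain ⟨v₂, hv₂S, hv₂n, hv₂m⟩ := hv f₂ h₂ hsub2
  obtain ⟨v₃, hv₃S, hv₃n, hv₃m⟩ := hv f₃ h₃ hsub3
  have hne12 : v₁ ≠ v₂ := by
    rintro rfl
    apply h12
    ext u
    constructor
    · intro hu
      exact hv₂m u (hsub1 hu) (fun h => hv₁n (h ▸ hu))
    · intro hu
      exact hv₁m u (hsub2 hu) (fun h => hv₂n (h ▸ hu))
  have hne13 : v₁ ≠ v₃ := by
    rintro rfl
    apply h13
    ext u
    constructor
    · intro hu
      exact hv₃m u (hsub1 hu) (fun h => hv₁n (h ▸ hu))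
    · intro hu
      exact hv₁m u (hsub3 hu) (fun h => hv₃n (h ▸ hu))
  have hne23 : v₂ ≠ v₃ := by
    rintro rfl
    apply h23
    ext u
    constructor
    · intro hu
      exact hv₃m u (hsub2 hu) (fun h => hv₂n (h ▸ hu))
    · intro hu
      exact hv₂m u (hsub3 hu) (fun h => hv₃n (h ▸ hu))
  -- even vertices coincide
  obtain ⟨e₁, he₁f, he₁⟩ := h₁.exEven
  obtain ⟨e₂, he₂f, he₂⟩ := h₂.exEven
  obtain ⟨e₃, he₃f, he₃⟩ := h₃.exEven
  have key12 : ∀ (f : Finset (ℕ × ℕ)) (g : GoodEdge f) (v : ℕ × ℕ),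
      v ∉ f → (∀ u ∈ S, u ≠ v → u ∈ f) →
      ∀ a b : ℕ × ℕ, a ∈ S → b ∈ S → Even a.2 → Even b.2 → a ≠ b →
      a = v ∨ b = v := by
    intro f g v hvn hvm a b haS hbS hea heb hab
    by_contra hcon
    push_neg at hcon
    exact hab (g.uniqEven (hvm a haS hcon.1) (hvm b hbS hcon.2) hea heb)
  have hee12 : e₁ = e₂ := by
    by_contra hne
    have hA := key12 f₁ h₁ v₁ hv₁n hv₁m e₁ e₂ (hsub1 he₁f) (hsub2 he₂f) he₁ he₂ hne
    have hB := key12 f₂ h₂ v₂ hv₂n hv₂m e₁ e₂ (hsub1 he₁f) (hsub2 he₂f) he₁ he₂ hne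
    have hC := key12 f₃ h₃ v₃ hv₃n hv₃m e₁ e₂ (hsub1 he₁f) (hsub2 he₂f) he₁ he₂ hne
    -- e₁ ∈ f₁ so e₁ ≠ v₁; hence e₂ = v₁. e₂ ∈ f₂ so e₂ ≠ v₂; hence e₁ = v₂.
    have h1' : e₂ = v₁ := by
      rcases hA with h | h
      · exact absurd (h ▸ he₁f) hv₁n
      · exact h
    have h2' : e₁ = v₂ := by
      rcases hB with h | h
      · exact h
      · exact absurd (h ▸ he₂f) hv₂n
    rcases hC with h | h
    · exact hne23 (h2'.symm.trans h)
    · exact hne13 (h1'.symm.trans h)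
  have hee13 : e₁ = e₃ := by
    by_contra hne
    have hA := key12 f₁ h₁ v₁ hv₁n hv₁m e₁ e₃ (hsub1 he₁f) (hsub3 he₃f) he₁ he₃ hne
    have hB := key12 f₃ h₃ v₃ hv₃n hv₃m e₁ e₃ (hsub1 he₁f) (hsub3 he₃f) he₁ he₃ hne
    have hC := key12 f₂ h₂ v₂ hv₂n hv₂m e₁ e₃ (hsub1 he₁f) (hsub3 he₃f) he₁ he₃ hne
    have h1' : e₃ = v₁ := by
      rcases hA with h | h
      · exact absurd (h ▸ he₁f) hv₁n
      · exact h
    have h2' : e₁ = v₃ := by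
      rcases hB with h | h
      · exact h
      · exact absurd (h ▸ he₃f) hv₃n
    rcases hC with h | h
    · exact hne23 (h.symm.trans h2')
    · exact hne12 (h1'.symm.trans h)
  -- so w := e₁ is the common even vertex
  have hwf₂ : e₁ ∈ f₂ := hee12 ▸ he₂f
  have hwf₃ : e₁ ∈ f₃ := hee13 ▸ he₃f
  -- vᵢ ≠ w
  have hv₁w : v₁ ≠ e₁ := fun h => hv₁n (h ▸ he₁f)
  have hv₂w : v₂ ≠ e₁ := fun h => hv₂n (h ▸ hwf₂)
  have hv₃w : v₃ ≠ e₁ := fun h => hv₃n (h ▸ hwf₃)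
  -- memberships
  have hv₂f₁ : v₂ ∈ f₁ := hv₁m v₂ hv₂S hne12.symm
  have hv₃f₁ : v₃ ∈ f₁ := hv₁m v₃ hv₃S hne13.symm
  have hv₁f₂ : v₁ ∈ f₂ := hv₂m v₁ hv₁S hne12
  have hv₃f₂ : v₃ ∈ f₂ := hv₂m v₃ hv₃S hne23.symm
  have hv₁f₃ : v₁ ∈ f₃ := hv₃m v₁ hv₁S hne13
  have hv₂f₃ : v₂ ∈ f₃ := hv₃m v₂ hv₂S hne23
  -- vᵢ are odd
  have ho₁ : Odd v₁.2 := h₂.oddOfNeEven hv₁f₂ hwf₂ he₁ hv₁w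
  have ho₂ : Odd v₂.2 := h₁.oddOfNeEven hv₂f₁ he₁f he₁ hv₂w
  have ho₃ : Odd v₃.2 := h₁.oddOfNeEven hv₃f₁ he₁f he₁ hv₃w
  -- pairwise distinct first coordinates
  have hc23 : v₂.1 ≠ v₃.1 := h₁.oddNe hv₂f₁ hv₃f₁ ho₂ ho₃ hne23
  have hc13 : v₁.1 ≠ v₃.1 := h₂.oddNe hv₁f₂ hv₃f₂ ho₁ ho₃ hne13
  have hc12 : v₁.1 ≠ v₂.1 := h₃.oddNe hv₁f₃ hv₂f₃ ho₁ ho₂ hne12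
  have hr1 := h₂.coordRange hv₁f₂
  have hr2 := h₁.coordRange hv₂f₁
  have hr3 := h₁.coordRange hv₃f₁
  -- one of them has first coordinate 3
  have h3 : v₁.1 = 3 ∨ v₂.1 = 3 ∨ v₃.1 = 3 := by omega
  -- parity: w ≠ vᵢ also as elements (already have); w's second coord even, v's odd
  rcases h3 with h3 | h3 | h3
  · have hA : e₁.1 = v₃.1 := h₂.three hv₁f₂ h3 hwf₂ hv₃f₂ hv₁w.symm hne13.symm
    have hB : e₁.1 = v₂.1 := h₃.three hv₁f₃ h3 hwf₃ hv₂f₃ hv₁w.symm hne12.symm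
    exact hc23 (hB.symm.trans hA)
  · have hA : e₁.1 = v₃.1 := h₁.three hv₂f₁ h3 he₁f hv₃f₁ hv₂w.symm hne23.symm
    have hB : e₁.1 = v₁.1 := h₃.three hv₂f₃ h3 hwf₃ hv₁f₃ hv₂w.symm hne12
    exact hc13 (hB.symm.trans hA)
  · have hA : e₁.1 = v₂.1 := h₁.three hv₃f₁ h3 he₁f hv₂f₁ hv₃w.symm hne23
    have hB : e₁.1 = v₁.1 := h₂.three hv₃f₂ h3 hwf₂ hv₁f₂ hv₃w.symm hne13
    exact hc12 (hB.symm.trans hA)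

/-- `ℰ ∪ ℱ` contains no `3` edges whose union has at most `4`
vertices. -/
theorem stmt7 (k : ℕ) (hk : 2 ≤ k) :
    ¬ ∃ f₁ ∈ calE k ∪ calF k, ∃ f₂ ∈ calE k ∪ calF k, ∃ f₃ ∈ calE k ∪ calF k,
      f₁ ≠ f₂ ∧ f₁ ≠ f₃ ∧ f₂ ≠ f₃ ∧ (f₁ ∪ f₂ ∪ f₃).card ≤ 4 := by
  rintro ⟨f₁, hf₁, f₂, hf₂, f₃, hf₃, h12, h13, h23, hcard⟩
  exact goodEdge_key (goodEdge_of_mem hk hf₁) (goodEdge_of_mem hk hf₂)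
    (goodEdge_of_mem hk hf₃) h12 h13 h23 hcard
end

section
/- Let k ≥ 2 be an integer. With the edge sets ℰ and ℱ defined as in the context, the F_3-bootstrap percolation process on the complete 3-graph with vertex set A_2^* ∪ {v_1^3} and initially infected 3-graph ℰ ∪ ℱ is stationary, i.e., it infects no new 3-edge. -/
open Finset

section Stmt8Aux

/-- label: 2*rowcode + parity -/
def vlab (v : ℕ × ℕ) : ℕ :=
  (if v.1 = 1 then 0 else if v.1 = 2 then 1 else 2) * 2 + v.2 % 2

lemma vlab_lt (v : ℕ × ℕ) : vlab v < 6 := by unfold vlab; split_ifs <;> omega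

def good (u v w : ℕ) : Bool :=
  (u / 2 == v / 2) && (u / 2 ≤ 1) && (u % 2 != v % 2) &&
    ((w / 2 == 2) || ((w / 2 ≤ 1) && (w / 2 != u / 2) && (w % 2 == 1)))

def trip (a b c : ℕ) : Bool := good a b c || good a c b || good b c a

def tripC (l0 l1 l2 l3 : Fin 6) : Fin 4 → Bool
  | 0 => trip l1 l2 l3
  | 1 => trip l0 l2 l3
  | 2 => trip l0 l1 l3
  | 3 => trip l0 l1 l2

def GoodP (u v w : ℕ × ℕ) : Prop :=
  u.1 = v.1 ∧ (u.1 = 1 ∨ u.1 = 2) ∧ u.2 % 2 ≠ v.2 % 2 ∧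
    (w = (3, 1) ∨ ((w.1 = 1 ∨ w.1 = 2) ∧ w.1 ≠ u.1 ∧ w.2 % 2 = 1))

lemma vlab_div (u : ℕ × ℕ) :
    vlab u / 2 = if u.1 = 1 then 0 else if u.1 = 2 then 1 else 2 := by
  unfold vlab; split_ifs <;> omega

lemma vlab_mod (u : ℕ × ℕ) : vlab u % 2 = u.2 % 2 := by
  unfold vlab; split_ifs <;> omega

lemma GoodP.swap {u v w : ℕ × ℕ} (h : GoodP u v w) : GoodP v u w := by
  obtain ⟨h1, h2, h3, h4⟩ := h
  refine ⟨h1.symm, h1 ▸ h2, h3.symm, ?_⟩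
  rcases h4 with h4 | ⟨a, b, c⟩
  · exact Or.inl h4
  · exact Or.inr ⟨a, h1 ▸ b, c⟩

lemma GoodP.distinct {u v w : ℕ × ℕ} (h : GoodP u v w) :
    u ≠ v ∧ u ≠ w ∧ v ≠ w := by
  obtain ⟨h1, h2, h3, h4⟩ := h
  refine ⟨fun e => h3 (by rw [e]), ?_, ?_⟩
  · rcases h4 with h4 | ⟨_, b, _⟩
    · rintro rfl; rw [h4] at h2; simp at h2
    · rintro rfl; exact b rfl
  · rcases h4 with h4 | ⟨_, b, _⟩
    · rintro rfl; simp only [h4] at h1; rw [h1] at h2; simp at h2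
    · rintro rfl; exact b h1.symm

lemma good_of_GoodP {u v w : ℕ × ℕ} (h : GoodP u v w) :
    good (vlab u) (vlab v) (vlab w) = true := by
  obtain ⟨h1, h2, h3, h4⟩ := h
  simp only [good, Bool.and_eq_true, Bool.or_eq_true, beq_iff_eq, bne_iff_ne,
    decide_eq_true_eq, vlab_div, vlab_mod]
  refine ⟨⟨⟨by rw [h1], ?_⟩, h3⟩, ?_⟩
  · rcases h2 with h2 | h2 <;> simp [h2]
  · rcases h4 with h4 | ⟨ha, hb, hc⟩
    · subst h4; left; norm_num
    · right
      refine ⟨⟨?_, ?_⟩, hc⟩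
      · rcases ha with ha | ha <;> simp [ha]
      · rcases ha with ha | ha <;> rcases h2 with h2 | h2 <;>
          simp [ha, h2] <;> omega

lemma main6 : ∀ l0 l1 l2 l3 : Fin 6,
    ((trip l1 l2 l3).toNat + (trip l0 l2 l3).toNat +
     (trip l0 l1 l3).toNat + (trip l0 l1 l2).toNat) ≤ 2 := by
  decide

lemma perm4 (L : Fin 4 → Fin 6) (x u v w : Fin 4)
    (huv : u ≠ v) (huw : u ≠ w) (hvw : v ≠ w)
    (hux : u ≠ x) (hvx : v ≠ x) (hwx : w ≠ x)
    (h1 : good (L u) (L v) (L w) = true)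
    (h2 : good (L v) (L u) (L w) = true) :
    tripC (L 0) (L 1) (L 2) (L 3) x = true := by
  fin_cases x <;> fin_cases u <;> fin_cases v <;> fin_cases w <;>
    simp_all [tripC, trip]

lemma main4 (L : Fin 4 → Fin 6) (x1 x2 x3 : Fin 4)
    (d12 : x1 ≠ x2) (d13 : x1 ≠ x3) (d23 : x2 ≠ x3)
    (h1 : tripC (L 0) (L 1) (L 2) (L 3) x1 = true)
    (h2 : tripC (L 0) (L 1) (L 2) (L 3) x2 = true)
    (h3 : tripC (L 0) (L 1) (L 2) (L 3) x3 = true) : False := by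
  have H := main6 (L 0) (L 1) (L 2) (L 3)
  fin_cases x1 <;> fin_cases x2 <;> fin_cases x3 <;> simp_all [tripC] <;> omega

/-- A 4-set cannot contain three distinct `GoodP` triples. -/
lemma no_three (f : Finset (ℕ × ℕ)) (hf : f.card = 4)
    (T1 T2 T3 : Finset (ℕ × ℕ))
    (h1 : T1 ⊆ f) (h2 : T2 ⊆ f) (h3 : T3 ⊆ f)
    (d12 : T1 ≠ T2) (d13 : T1 ≠ T3) (d23 : T2 ≠ T3)
    (s1 : ∃ u v w, T1 = {u, v, w} ∧ GoodP u v w)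
    (s2 : ∃ u v w, T2 = {u, v, w} ∧ GoodP u v w)
    (s3 : ∃ u v w, T3 = {u, v, w} ∧ GoodP u v w) : False := by
  classical
  have card3 : ∀ T : Finset (ℕ × ℕ), (∃ u v w, T = {u, v, w} ∧ GoodP u v w) →
      T.card = 3 := by
    rintro T ⟨u, v, w, rfl, hg⟩
    obtain ⟨huv, huw, hvw⟩ := hg.distinct
    rw [Finset.card_insert_of_notMem (by simp [huv, huw]),
      Finset.card_insert_of_notMem (by simp [hvw]), Finset.card_singleton]
  have omitted : ∀ T : Finset (ℕ × ℕ), T ⊆ f → T.card = 3 →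
      ∃ x, x ∈ f ∧ x ∉ T ∧ f \ T = {x} := by
    intro T hTf hT3
    have : (f \ T).card = 1 := by rw [Finset.card_sdiff_of_subset hTf, hf, hT3]
    obtain ⟨x, hx⟩ := Finset.card_eq_one.mp this
    have hxm : x ∈ f \ T := hx ▸ Finset.mem_singleton_self x
    rw [Finset.mem_sdiff] at hxm
    exact ⟨x, hxm.1, hxm.2, hx⟩
  obtain ⟨x1, hx1f, hx1T, hd1⟩ := omitted T1 h1 (card3 T1 s1)
  obtain ⟨x2, hx2f, hx2T, hd2⟩ := omitted T2 h2 (card3 T2 s2)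
  obtain ⟨x3, hx3f, hx3T, hd3⟩ := omitted T3 h3 (card3 T3 s3)
  have recov : ∀ T : Finset (ℕ × ℕ), T ⊆ f → f \ (f \ T) = T := by
    intro T hTf
    exact Finset.sdiff_sdiff_eq_self hTf
  have xne : ∀ (T T' : Finset (ℕ × ℕ)) (x x' : ℕ × ℕ), T ⊆ f → T' ⊆ f →
      T ≠ T' → f \ T = {x} → f \ T' = {x'} → x ≠ x' := by
    rintro T T' x x' hTf hT'f hne hx hx' rfl
    exact hne (by rw [← recov T hTf, ← recov T' hT'f, hx, hx'])
  let E : {x // x ∈ f} ≃ Fin 4 := f.equivFin.trans (finCongr hf)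
  let L : Fin 4 → Fin 6 := fun i => ⟨vlab ((E.symm i) : ℕ × ℕ), vlab_lt _⟩
  have hL : ∀ (v : ℕ × ℕ) (h : v ∈ f), ((L (E ⟨v, h⟩)) : ℕ) = vlab v := by
    intro v h
    show (vlab ((E.symm (E ⟨v, h⟩)) : ℕ × ℕ)) = vlab v
    rw [Equiv.symm_apply_apply]
  have hinj : ∀ (a b : ℕ × ℕ) (ha : a ∈ f) (hb : b ∈ f), a ≠ b →
      E ⟨a, ha⟩ ≠ E ⟨b, hb⟩ := by
    intro a b ha hb hne he
    exact hne (Subtype.mk_eq_mk.mp (E.injective he))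
  have key : ∀ (T : Finset (ℕ × ℕ)) (x : ℕ × ℕ) (hTf : T ⊆ f) (hxf : x ∈ f),
      x ∉ T → (∃ u v w, T = {u, v, w} ∧ GoodP u v w) →
      tripC (L 0) (L 1) (L 2) (L 3) (E ⟨x, hxf⟩) = true := by
    rintro T x hTf hxf hxT ⟨u, v, w, rfl, hg⟩
    obtain ⟨huv, huw, hvw⟩ := hg.distinct
    have hu : u ∈ f := hTf (by simp)
    have hv : v ∈ f := hTf (by simp)
    have hw : w ∈ f := hTf (by simp)
    have hux : u ≠ x := fun e => hxT (e ▸ (by simp : u ∈ ({u,v,w} : Finset (ℕ×ℕ))))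
    have hvx : v ≠ x := fun e => hxT (e ▸ (by simp : v ∈ ({u,v,w} : Finset (ℕ×ℕ))))
    have hwx : w ≠ x := fun e => hxT (e ▸ (by simp : w ∈ ({u,v,w} : Finset (ℕ×ℕ))))
    refine perm4 L (E ⟨x, hxf⟩) (E ⟨u, hu⟩) (E ⟨v, hv⟩) (E ⟨w, hw⟩)
      (hinj _ _ _ _ huv) (hinj _ _ _ _ huw) (hinj _ _ _ _ hvw)
      (hinj _ _ _ _ hux) (hinj _ _ _ _ hvx) (hinj _ _ _ _ hwx) ?_ ?_
    · rw [hL u hu, hL v hv, hL w hw]; exact good_of_GoodP hg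
    · rw [hL u hu, hL v hv, hL w hw]; exact good_of_GoodP hg.swap
  exact main4 L (E ⟨x1, hx1f⟩) (E ⟨x2, hx2f⟩) (E ⟨x3, hx3f⟩)
    (hinj _ _ _ _ (xne T1 T2 x1 x2 h1 h2 d12 hd1 hd2))
    (hinj _ _ _ _ (xne T1 T3 x1 x3 h1 h3 d13 hd1 hd3))
    (hinj _ _ _ _ (xne T2 T3 x2 x3 h2 h3 d23 hd2 hd3))
    (key T1 x1 h1 hx1f hx1T s1) (key T2 x2 h2 hx2f hx2T s2)
    (key T3 x3 h3 hx3f hx3T s3)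

end Stmt8Aux

lemma triple_rot {X : Type*} [DecidableEq X] (a b c : X) :
    ({a, b, c} : Finset X) = {b, c, a} := by
  ext x; simp; tauto

lemma shape_of_mem {k : ℕ} {T : Finset (ℕ × ℕ)} (hT : T ∈ calE k ∪ calF k) :
    ∃ u v w : ℕ × ℕ, T = {u, v, w} ∧ GoodP u v w := by
  rw [Finset.mem_union] at hT
  rcases hT with h | h
  · unfold calE at h
    simp only [Finset.mem_biUnion, Finset.mem_union, Finset.mem_image,
      Finset.mem_Icc] at h
    obtain ⟨i, ⟨hi1, hi2⟩, hcase⟩ := h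
    rcases hcase with ((⟨j, hj, rfl⟩ | ⟨j, hj, rfl⟩) | ⟨j, hj, rfl⟩) | ⟨j, hj, rfl⟩
    · exact ⟨(2, j), (2, j + 1), (1, 2 * i - 1), triple_rot _ _ _,
        rfl, Or.inr rfl, by omega, Or.inr ⟨Or.inl rfl, by omega, by omega⟩⟩
    · exact ⟨(1, j), (1, j + 1), (2, 4 * k - 1 - 2 * i), rfl,
        rfl, Or.inl rfl, by omega, Or.inr ⟨Or.inr rfl, by omega, by omega⟩⟩
    · exact ⟨(2, j), (2, j + 1), (1, 4 * k - 1 - 2 * i), triple_rot _ _ _,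
        rfl, Or.inr rfl, by omega, Or.inr ⟨Or.inl rfl, by omega, by omega⟩⟩
    · exact ⟨(1, j), (1, j + 1), (2, 2 * i + 1), rfl,
        rfl, Or.inl rfl, by omega, Or.inr ⟨Or.inr rfl, by omega, by omega⟩⟩
  · unfold calF at h
    simp only [Finset.mem_biUnion, Finset.mem_image, Finset.mem_Icc] at h
    obtain ⟨j, hj, l, hl, rfl⟩ := h
    exact ⟨(l, j), (l, j + 1), (3, 1), rfl, rfl, by omega, by omega, Or.inl rfl⟩

/-- the `F₃`-bootstrap process on the complete `3`-graph with
vertex set `A_2^* ∪ {v_1^3}` and initially infected graph `ℰ ∪ ℱ` is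
stationary. -/
theorem stmt8 (k : ℕ) (hk : 2 ≤ k) :
    Stationary 3 (Astar k 2 ∪ {((3 : ℕ), (1 : ℕ))}) (calE k ∪ calF k) := by
  classical
  unfold Stationary bootStep
  rw [Finset.union_eq_left]
  intro e he
  exfalso
  simp only [Finset.mem_filter] at he
  obtain ⟨-, f, hf, hsd⟩ := he
  rw [Finset.mem_powersetCard] at hf
  obtain ⟨-, hfcard⟩ := hf
  have hP3card : (f.powersetCard 3).card = 4 := by
    rw [Finset.card_powersetCard, hfcard]; rfl
  have heP3 : e ∈ f.powersetCard 3 := by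
    have : e ∈ f.powersetCard 3 \ (calE k ∪ calF k) := by
      rw [hsd]; exact Finset.mem_singleton_self e
    exact (Finset.mem_sdiff.mp this).1
  have hIcard : (f.powersetCard 3 ∩ (calE k ∪ calF k)).card = 3 := by
    have h1 : f.powersetCard 3 ∩ (calE k ∪ calF k) = f.powersetCard 3 \ {e} := by
      rw [← hsd, sdiff_sdiff_right_self, Finset.inf_eq_inter]
    rw [h1, Finset.card_sdiff_of_subset (Finset.singleton_subset_iff.mpr heP3), hP3card,
      Finset.card_singleton]
  obtain ⟨T1, T2, T3, d12, d13, d23, hTeq⟩ := Finset.card_eq_three.mp hIcard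
  have mem : ∀ T ∈ ({T1, T2, T3} : Finset (Finset (ℕ × ℕ))),
      T ⊆ f ∧ T ∈ calE k ∪ calF k := by
    intro T hT
    rw [← hTeq, Finset.mem_inter, Finset.mem_powersetCard] at hT
    exact ⟨hT.1.1, hT.2⟩
  exact no_three f hfcard T1 T2 T3
    (mem T1 (by simp)).1 (mem T2 (by simp)).1 (mem T3 (by simp)).1
    d12 d13 d23
    (shape_of_mem (mem T1 (by simp)).2)
    (shape_of_mem (mem T2 (by simp)).2)
    (shape_of_mem (mem T3 (by simp)).2)
end

section
/- Under the hypotheses and definitions of the gluing construction in the context (with H = H_1 ∪ ⋯ ∪ H_{4k−3}), the F_r-bootstrap process on the complete r-graph on V(H) with initially infected r-graph H \ {e_0} is stationary, i.e., it infects no new r-edge. -/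
open Finset

/-- Replace the vertex `a` by the vertex `b` in every edge of `H`. -/
def relabel (a b : ℕ × ℕ) (H : Finset (Finset (ℕ × ℕ))) : Finset (Finset (ℕ × ℕ)) :=
  H.image fun f => f.image fun x => if x = a then b else x

open Classical in
/-- The gadget `r`-graph `{e ⊆ {u, v, w} ∪ em : |e| = r, {u, w} ⊄ e, em ⊄ e}`. -/
noncomputable def gadget (r : ℕ) (u v w : ℕ × ℕ) (em : Finset (ℕ × ℕ)) :
    Finset (Finset (ℕ × ℕ)) :=
  (({u, v, w} ∪ em).powersetCard r).filter fun e => ¬ {u, w} ⊆ e ∧ ¬ em ⊆ e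

/-- The glued `r`-graph `H = H₁ ∪ H₂ ∪ ⋯ ∪ H_{4k-3}`: the copies `H_{2j-1}` of
`H₁ \ {e₀}` obtained by replacing `v_1^r` by `v_{2j-1}^r`, together with the
gadgets `H_{4j-2}` (built on `e_{T₁}^-`) and `H_{4j}` (built on `e_0^-`). -/
noncomputable def glueH (r k T₁ : ℕ) (H₁ : Finset (Finset (ℕ × ℕ)))
    (e : ℕ → Finset (ℕ × ℕ)) : Finset (Finset (ℕ × ℕ)) :=
  H₁ ∪
  ((Finset.Icc 1 (2 * k - 1)).biUnion fun j =>
    relabel (r, 1) (r, 2 * j - 1) (H₁ \ {e 0})) ∪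
  ((Finset.Icc 1 (k - 1)).biUnion fun j =>
    gadget r (r, 4 * j - 3) (r, 4 * j - 2) (r, 4 * j - 1) ((e T₁).erase (r, 1))) ∪
  ((Finset.Icc 1 (k - 1)).biUnion fun j =>
    gadget r (r, 4 * j - 1) (r, 4 * j) (r, 4 * j + 1) ((e 0).erase (r, 1)))

section Helpers

variable {V : Type*} [DecidableEq V]

lemma subset_bootStep (r : ℕ) (W : Finset V) (G : Finset (Finset V)) :
    G ⊆ bootStep r W G := Finset.subset_union_left

lemma subset_bootIter (r : ℕ) (W : Finset V) (G : Finset (Finset V)) (n : ℕ) :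
    G ⊆ bootIter r W G n := by
  induction n with
  | zero => exact subset_rfl
  | succ n ih => exact ih.trans (subset_bootStep _ _ _)

lemma stationary_no_f {r : ℕ} {W : Finset V} {G : Finset (Finset V)}
    (hst : Stationary r W G) {f : Finset V} (hf : f ∈ W.powersetCard (r + 1))
    (a : Finset V) : f.powersetCard r \ G ≠ {a} := by
  intro h
  have ha : a ∈ f.powersetCard r \ G := h ▸ Finset.mem_singleton_self a
  have haG : a ∉ G := (Finset.mem_sdiff.1 ha).2
  have haW : a ∈ W.powersetCard r := by
    have h2 := (Finset.mem_sdiff.1 ha).1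
    rw [Finset.mem_powersetCard] at h2 ⊢
    exact ⟨h2.1.trans (Finset.mem_powersetCard.1 hf).1, h2.2⟩
  have hmem : a ∈ bootStep r W G := by
    simp only [bootStep, Finset.mem_union, Finset.mem_filter]
    exact Or.inr ⟨haW, f, hf, h⟩
  rw [hst] at hmem
  exact haG hmem

lemma stationary_of {r : ℕ} {W : Finset V} {G : Finset (Finset V)}
    (h : ∀ f ∈ W.powersetCard (r + 1), ∀ a : Finset V, f.powersetCard r \ G ≠ {a}) :
    Stationary r W G := by
  unfold Stationary bootStep
  rw [Finset.union_eq_left]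
  intro a ha
  simp only [Finset.mem_filter] at ha
  obtain ⟨-, f, hf, hfa⟩ := ha
  exact absurd hfa (h f hf a)

end Helpers

lemma mem_A {k i : ℕ} {x : ℕ × ℕ} :
    x ∈ A k i ↔ x.1 = i ∧ 1 ≤ x.2 ∧ x.2 ≤ 4 * k - 3 := by
  simp only [A, Finset.mem_image, Finset.mem_Icc]
  constructor
  · rintro ⟨j, hj, rfl⟩; exact ⟨rfl, hj.1, hj.2⟩
  · rintro ⟨h1, h2, h3⟩
    exact ⟨x.2, ⟨h2, h3⟩, by rw [← h1]⟩

lemma mem_Astar {k m : ℕ} {x : ℕ × ℕ} :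
    x ∈ Astar k m ↔ (1 ≤ x.1 ∧ x.1 ≤ m) ∧ 1 ≤ x.2 ∧ x.2 ≤ 4 * k - 3 := by
  simp only [Astar, Finset.mem_biUnion, Finset.mem_Icc, mem_A]
  constructor
  · rintro ⟨i, hi, rfl, h2⟩; exact ⟨hi, h2⟩
  · rintro ⟨h1, h2⟩; exact ⟨x.1, h1, rfl, h2⟩

lemma image_swap_of_mem {a b : ℕ × ℕ} {h : Finset (ℕ × ℕ)} (ha : a ∈ h) :
    (h.image fun x => if x = a then b else x) = insert b (h.erase a) := by
  ext z
  simp only [Finset.mem_image, Finset.mem_insert, Finset.mem_erase]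
  constructor
  · rintro ⟨y, hy, rfl⟩
    by_cases hya : y = a
    · left; rw [if_pos hya]
    · right; rw [if_neg hya]; exact ⟨hya, hy⟩
  · rintro (rfl | ⟨hza, hz⟩)
    · exact ⟨a, ha, if_pos rfl⟩
    · exact ⟨z, hz, if_neg hza⟩

lemma image_swap_of_notMem {a b : ℕ × ℕ} {h : Finset (ℕ × ℕ)} (ha : a ∉ h) :
    (h.image fun x => if x = a then b else x) = h := by
  rw [Finset.image_congr (g := id), Finset.image_id]
  intro x hx
  simp only [id]
  exact if_neg (by rintro rfl; exact ha hx)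

lemma gadget_analyze {r : ℕ} (hr : 3 ≤ r) {n : ℕ} (hn : 2 ≤ n) {em g : Finset (ℕ × ℕ)}
    (hemc : em.card = r - 1) (hemrow : ∀ z ∈ em, z.1 ≠ r)
    (hg : g ∈ gadget r ((r : ℕ), n - 1) ((r : ℕ), n) ((r : ℕ), n + 1) em) :
    ∃ m, (m + 1 = n ∨ m = n + 1) ∧ ((r : ℕ), n) ∈ g ∧ ((r : ℕ), m) ∈ g ∧
      (∀ z ∈ g, z.1 = r → (z = ((r : ℕ), n) ∨ z = ((r : ℕ), m))) ∧
      (∀ z ∈ g, z.1 = r ∨ z ∈ em) := by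
  set u : ℕ × ℕ := ((r : ℕ), n - 1) with hu
  set v : ℕ × ℕ := ((r : ℕ), n) with hvdef
  set w : ℕ × ℕ := ((r : ℕ), n + 1) with hw
  have huv : u ≠ v := by simp only [hu, hvdef, ne_eq, Prod.mk.injEq]; omega
  have hvw : v ≠ w := by simp only [hvdef, hw, ne_eq, Prod.mk.injEq]; omega
  have huw : u ≠ w := by simp only [hu, hw, ne_eq, Prod.mk.injEq]; omega
  simp only [gadget, Finset.mem_filter, Finset.mem_powersetCard] at hg
  obtain ⟨⟨hsub, hcard⟩, huwg, hemg⟩ := hg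
  have hz3 : ∀ z ∈ g, z = u ∨ z = v ∨ z = w ∨ z ∈ em := by
    intro z hz
    have h2 := hsub hz
    simp only [Finset.mem_union, Finset.mem_insert, Finset.mem_singleton] at h2
    tauto
  obtain ⟨z, hzem, hzg⟩ := Finset.not_subset.1 hemg
  have hcap : (em ∩ g).card ≤ r - 2 := by
    have h1 : em ∩ g ⊆ em.erase z := by
      intro a ha
      rw [Finset.mem_erase]
      exact ⟨fun h => hzg (h ▸ (Finset.mem_inter.1 ha).2), (Finset.mem_inter.1 ha).1⟩
    calc (em ∩ g).card ≤ (em.erase z).card := Finset.card_le_card h1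
      _ = r - 1 - 1 := by rw [Finset.card_erase_of_mem hzem, hemc]
      _ ≤ r - 2 := by omega
  have hsplit : g ⊆ ({u, v, w} ∩ g) ∪ (em ∩ g) := by
    intro a ha
    rcases Finset.mem_union.1 (hsub ha) with h | h
    · exact Finset.mem_union_left _ (Finset.mem_inter.2 ⟨h, ha⟩)
    · exact Finset.mem_union_right _ (Finset.mem_inter.2 ⟨h, ha⟩)
  have hcard2 : 2 ≤ (({u, v, w} : Finset (ℕ × ℕ)) ∩ g).card := by
    have h2 := (Finset.card_le_card hsplit).trans (Finset.card_union_le _ _)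
    omega
  have hnotboth : ¬ (u ∈ g ∧ w ∈ g) := by
    rintro ⟨h1, h2⟩
    exact huwg (by simp [Finset.insert_subset_iff, h1, h2])
  have hrowmem : ∀ z' ∈ g, z'.1 = r → (z' = u ∨ z' = v ∨ z' = w) := by
    intro z' hz' hz'r
    rcases hz3 z' hz' with h | h | h | h
    · exact Or.inl h
    · exact Or.inr (Or.inl h)
    · exact Or.inr (Or.inr h)
    · exact absurd hz'r (hemrow z' h)
  by_cases hug : u ∈ g
  · have hwg : w ∉ g := fun h => hnotboth ⟨hug, h⟩
    have hvg : v ∈ g := by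
      by_contra hvg
      have hss : ({u, v, w} : Finset (ℕ × ℕ)) ∩ g ⊆ {u} := by
        intro a ha
        obtain ⟨h1, h2⟩ := Finset.mem_inter.1 ha
        simp only [Finset.mem_insert, Finset.mem_singleton] at h1 ⊢
        rcases h1 with rfl | rfl | rfl
        · rfl
        · exact absurd h2 hvg
        · exact absurd h2 hwg
      have h3 := Finset.card_le_card hss
      simp only [Finset.card_singleton] at h3
      omega
    refine ⟨n - 1, Or.inl (by omega), hvg, hug, ?_, ?_⟩
    · intro z' hz' hz'r
      rcases hrowmem z' hz' hz'r with h | h | h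
      · exact Or.inr h
      · exact Or.inl h
      · exact absurd (h ▸ hz') hwg
    · intro z' hz'
      rcases hz3 z' hz' with h | h | h | h
      · exact Or.inl (by rw [h])
      · exact Or.inl (by rw [h])
      · exact Or.inl (by rw [h])
      · exact Or.inr h
  · have hvg : v ∈ g := by
      by_contra hvg
      have hss : ({u, v, w} : Finset (ℕ × ℕ)) ∩ g ⊆ {w} := by
        intro a ha
        obtain ⟨h1, h2⟩ := Finset.mem_inter.1 ha
        simp only [Finset.mem_insert, Finset.mem_singleton] at h1 ⊢
        rcases h1 with rfl | rfl | rfl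
        · exact absurd h2 hug
        · exact absurd h2 hvg
        · rfl
      have h3 := Finset.card_le_card hss
      simp only [Finset.card_singleton] at h3
      omega
    have hwg : w ∈ g := by
      by_contra hwg
      have hss : ({u, v, w} : Finset (ℕ × ℕ)) ∩ g ⊆ {v} := by
        intro a ha
        obtain ⟨h1, h2⟩ := Finset.mem_inter.1 ha
        simp only [Finset.mem_insert, Finset.mem_singleton] at h1 ⊢
        rcases h1 with rfl | rfl | rfl
        · exact absurd h2 hug
        · rfl
        · exact absurd h2 hwg
      have h3 := Finset.card_le_card hss
      simp only [Finset.card_singleton] at h3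
      omega
    refine ⟨n + 1, Or.inr rfl, hvg, hwg, ?_, ?_⟩
    · intro z' hz' hz'r
      rcases hrowmem z' hz' hz'r with h | h | h
      · exact absurd (h ▸ hz') hug
      · exact Or.inl h
      · exact Or.inr h
    · intro z' hz'
      rcases hz3 z' hz' with h | h | h | h
      · exact Or.inl (by rw [h])
      · exact Or.inl (by rw [h])
      · exact Or.inl (by rw [h])
      · exact Or.inr h

lemma glue_cases {r k T₁ : ℕ} {H₁ : Finset (Finset (ℕ × ℕ))} {e : ℕ → Finset (ℕ × ℕ)}
    {g : Finset (ℕ × ℕ)} (hg : g ∈ glueH r k T₁ H₁ e) :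
    g ∈ H₁ ∨
    (∃ j, 1 ≤ j ∧ j ≤ 2 * k - 1 ∧ ∃ h, (h ∈ H₁ ∧ h ≠ e 0) ∧
      g = h.image fun x => if x = ((r : ℕ), (1 : ℕ)) then ((r : ℕ), 2 * j - 1) else x) ∨
    (∃ j, 1 ≤ j ∧ j ≤ k - 1 ∧
      g ∈ gadget r (r, 4 * j - 3) (r, 4 * j - 2) (r, 4 * j - 1) ((e T₁).erase (r, 1))) ∨
    (∃ j, 1 ≤ j ∧ j ≤ k - 1 ∧
      g ∈ gadget r (r, 4 * j - 1) (r, 4 * j) (r, 4 * j + 1) ((e 0).erase (r, 1))) := by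
  simp only [glueH, relabel, Finset.mem_union, Finset.mem_biUnion, Finset.mem_image,
    Finset.mem_Icc, Finset.mem_sdiff, Finset.mem_singleton] at hg
  rcases hg with ((h | h) | h) | h
  · exact Or.inl h
  · obtain ⟨j, hj, h, hh, hgh⟩ := h
    exact Or.inr (Or.inl ⟨j, hj.1, hj.2, h, hh, hgh.symm⟩)
  · obtain ⟨j, hj, h⟩ := h
    exact Or.inr (Or.inr (Or.inl ⟨j, hj.1, hj.2, h⟩))
  · obtain ⟨j, hj, h⟩ := h
    exact Or.inr (Or.inr (Or.inr ⟨j, hj.1, hj.2, h⟩))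

section Glue

variable {r k T₁ : ℕ} {H₁ : Finset (Finset (ℕ × ℕ))} {e : ℕ → Finset (ℕ × ℕ)}

lemma W'_subset (hr : 3 ≤ r) (hk : 2 ≤ k) :
    Astar k (r - 1) ∪ {((r : ℕ), (1 : ℕ))} ⊆ Astar k r := by
  intro z hz
  rcases Finset.mem_union.1 hz with h | h
  · rw [mem_Astar] at h ⊢
    exact ⟨⟨h.1.1, by omega⟩, h.2⟩
  · rw [Finset.mem_singleton] at h
    subst h
    rw [mem_Astar]
    exact ⟨⟨by omega, le_rfl⟩, by omega, by omega⟩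

lemma mem_W'_row (hr : 3 ≤ r) {k : ℕ} {z : ℕ × ℕ}
    (hz : z ∈ Astar k (r - 1) ∪ {((r : ℕ), (1 : ℕ))}) (hzr : z.1 = r) :
    z = ((r : ℕ), (1 : ℕ)) := by
  rcases Finset.mem_union.1 hz with h | h
  · rw [mem_Astar] at h
    exact absurd hzr (by omega)
  · exact Finset.mem_singleton.1 h

lemma erase_facts (hr : 3 ≤ r) {k : ℕ} {s : Finset (ℕ × ℕ)}
    (hsW : s ⊆ Astar k (r - 1) ∪ {((r : ℕ), (1 : ℕ))}) (hsc : s.card = r)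
    (hs1 : ((r : ℕ), (1 : ℕ)) ∈ s) :
    (s.erase ((r : ℕ), (1 : ℕ))).card = r - 1 ∧
    (∀ z ∈ s.erase ((r : ℕ), (1 : ℕ)), z.1 ≠ r) ∧
    insert ((r : ℕ), (1 : ℕ)) (s.erase ((r : ℕ), (1 : ℕ))) = s := by
  refine ⟨by rw [Finset.card_erase_of_mem hs1, hsc], ?_, Finset.insert_erase hs1⟩
  intro z hz
  obtain ⟨hz1, hz2⟩ := Finset.mem_erase.1 hz
  intro hzr
  exact hz1 (mem_W'_row hr (hsW hz2) hzr)

lemma H1_subset_glue : H₁ ⊆ glueH r k T₁ H₁ e := by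
  intro g hg
  simp only [glueH, Finset.mem_union]
  tauto

lemma copy_mem_glue (hk : 2 ≤ k) {h : Finset (ℕ × ℕ)} (hh : h ∈ H₁) (hne : h ≠ e 0)
    (h1 : ((r : ℕ), (1 : ℕ)) ∈ h) {m : ℕ} (hm : Odd m) (hm2 : m ≤ 4 * k - 3) :
    insert ((r : ℕ), m) (h.erase ((r : ℕ), (1 : ℕ))) ∈ glueH r k T₁ H₁ e := by
  obtain ⟨t, rfl⟩ := hm
  simp only [glueH, Finset.mem_union, Finset.mem_biUnion, Finset.mem_Icc, relabel,
    Finset.mem_image, Finset.mem_sdiff, Finset.mem_singleton]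
  left; left; right
  refine ⟨t + 1, ⟨by omega, by omega⟩, h, ⟨hh, hne⟩, ?_⟩
  rw [image_swap_of_mem h1, show 2 * (t + 1) - 1 = 2 * t + 1 from by omega]

section Classify

variable (hr : 3 ≤ r)
  (hH₁edges : H₁ ⊆ (Astar k (r - 1) ∪ {((r : ℕ), (1 : ℕ))}).powersetCard r)
  (hsT : e T₁ ⊆ Astar k (r - 1) ∪ {((r : ℕ), (1 : ℕ))}) (hcT : (e T₁).card = r)
  (hvT : ((r : ℕ), (1 : ℕ)) ∈ e T₁)
  (hs0 : e 0 ⊆ Astar k (r - 1) ∪ {((r : ℕ), (1 : ℕ))}) (hc0 : (e 0).card = r)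
  (hv0 : ((r : ℕ), (1 : ℕ)) ∈ e 0)

include hr hH₁edges hsT hcT hvT hs0 hc0 hv0

lemma glue_zeroRow {g : Finset (ℕ × ℕ)} (hg : g ∈ glueH r k T₁ H₁ e)
    (hrow : ∀ z ∈ g, z.1 ≠ r) : g ∈ H₁ := by
  obtain ⟨hcTe, hrTe, -⟩ := erase_facts hr hsT hcT hvT
  obtain ⟨hc0e, hr0e, -⟩ := erase_facts hr hs0 hc0 hv0
  rcases glue_cases hg with h | ⟨j, hj1, hj2, h, ⟨hh, hne⟩, hgeq⟩ | ⟨j, hj1, hj2, h⟩ |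
      ⟨j, hj1, hj2, h⟩
  · exact h
  · by_cases h1 : ((r : ℕ), (1 : ℕ)) ∈ h
    · rw [image_swap_of_mem h1] at hgeq
      exact absurd rfl (hrow ((r : ℕ), 2 * j - 1)
        (hgeq ▸ Finset.mem_insert_self _ _))
    · rw [image_swap_of_notMem h1] at hgeq
      exact hgeq ▸ hh
  · obtain ⟨m, -, hvn, -⟩ := gadget_analyze hr (n := 4 * j - 2) (by omega) hcTe hrTe
      (by rw [show 4 * j - 2 - 1 = 4 * j - 3 from by omega,
        show 4 * j - 2 + 1 = 4 * j - 1 from by omega]; exact h)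
    exact absurd rfl (hrow _ hvn)
  · obtain ⟨m, -, hvn, -⟩ := gadget_analyze hr (n := 4 * j) (by omega) hc0e hr0e
      (by rw [show 4 * j - 1 = 4 * j - 1 from rfl]; exact h)
    exact absurd rfl (hrow _ hvn)

lemma glue_oneRow {g : Finset (ℕ × ℕ)} (hg : g ∈ glueH r k T₁ H₁ e) (hg0 : g ≠ e 0)
    {m : ℕ} (hx : ((r : ℕ), m) ∈ g)
    (hrow : ∀ z ∈ g, z.1 = r → z = ((r : ℕ), m)) :
    Odd m ∧ ∃ h, h ∈ H₁ ∧ h ≠ e 0 ∧ ((r : ℕ), (1 : ℕ)) ∈ h ∧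
      g = insert ((r : ℕ), m) (h.erase ((r : ℕ), (1 : ℕ))) := by
  obtain ⟨hcTe, hrTe, -⟩ := erase_facts hr hsT hcT hvT
  obtain ⟨hc0e, hr0e, -⟩ := erase_facts hr hs0 hc0 hv0
  rcases glue_cases hg with h | ⟨j, hj1, hj2, h, ⟨hh, hne⟩, hgeq⟩ | ⟨j, hj1, hj2, h⟩ |
      ⟨j, hj1, hj2, h⟩
  · have hgW := Finset.mem_powersetCard.1 (hH₁edges h)
    have hm1 : ((r : ℕ), m) = ((r : ℕ), (1 : ℕ)) := mem_W'_row hr (hgW.1 hx) rfl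
    have hm1' : m = 1 := (Prod.ext_iff.1 hm1).2
    subst hm1'
    exact ⟨⟨0, by omega⟩, g, h, hg0, hx, (Finset.insert_erase hx).symm⟩
  · by_cases h1 : ((r : ℕ), (1 : ℕ)) ∈ h
    · rw [image_swap_of_mem h1] at hgeq
      have hjm : ((r : ℕ), 2 * j - 1) = ((r : ℕ), m) :=
        hrow _ (hgeq ▸ Finset.mem_insert_self _ _) rfl
      have hjm' : m = 2 * j - 1 := (Prod.ext_iff.1 hjm).2.symm
      subst hjm'
      exact ⟨⟨j - 1, by omega⟩, h, hh, hne, h1, hgeq⟩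
    · rw [image_swap_of_notMem h1] at hgeq
      have hgW := Finset.mem_powersetCard.1 (hH₁edges (hgeq ▸ hh))
      have hm1 : ((r : ℕ), m) = ((r : ℕ), (1 : ℕ)) := mem_W'_row hr (hgW.1 hx) rfl
      exact absurd (hm1 ▸ hx) (hgeq ▸ h1)
  · obtain ⟨m', hcons, hvn, hvm, -⟩ := gadget_analyze hr (n := 4 * j - 2) (by omega)
      hcTe hrTe (by rw [show 4 * j - 2 - 1 = 4 * j - 3 from by omega,
        show 4 * j - 2 + 1 = 4 * j - 1 from by omega]; exact h)
    have e1 : ((r : ℕ), 4 * j - 2) = ((r : ℕ), m) := hrow _ hvn rfl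
    have e2 : ((r : ℕ), m') = ((r : ℕ), m) := hrow _ hvm rfl
    have := (Prod.ext_iff.1 e1).2
    have := (Prod.ext_iff.1 e2).2
    omega
  · obtain ⟨m', hcons, hvn, hvm, -⟩ := gadget_analyze hr (n := 4 * j) (by omega)
      hc0e hr0e h
    have e1 : ((r : ℕ), 4 * j) = ((r : ℕ), m) := hrow _ hvn rfl
    have e2 : ((r : ℕ), m') = ((r : ℕ), m) := hrow _ hvm rfl
    have := (Prod.ext_iff.1 e1).2
    have := (Prod.ext_iff.1 e2).2
    omega

lemma glue_twoRow {g : Finset (ℕ × ℕ)} (hg : g ∈ glueH r k T₁ H₁ e)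
    {p q : ℕ} (hp : ((r : ℕ), p) ∈ g) (hq : ((r : ℕ), q) ∈ g) (hpq : p ≠ q) :
    ∃ n m : ℕ, (m + 1 = n ∨ m = n + 1) ∧
      ((p = n ∧ q = m) ∨ (p = m ∧ q = n)) ∧
      ((n % 4 = 2 ∧
          ∀ z ∈ g, z = ((r : ℕ), n) ∨ z = ((r : ℕ), m) ∨
            z ∈ (e T₁).erase ((r : ℕ), (1 : ℕ))) ∨
       (n % 4 = 0 ∧
          ∀ z ∈ g, z = ((r : ℕ), n) ∨ z = ((r : ℕ), m) ∨
            z ∈ (e 0).erase ((r : ℕ), (1 : ℕ)))) := by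
  obtain ⟨hcTe, hrTe, -⟩ := erase_facts hr hsT hcT hvT
  obtain ⟨hc0e, hr0e, -⟩ := erase_facts hr hs0 hc0 hv0
  rcases glue_cases hg with h | ⟨j, hj1, hj2, h, ⟨hh, hne⟩, hgeq⟩ | ⟨j, hj1, hj2, h⟩ |
      ⟨j, hj1, hj2, h⟩
  · have hgW := Finset.mem_powersetCard.1 (hH₁edges h)
    have e1 := mem_W'_row hr (hgW.1 hp) rfl
    have e2 := mem_W'_row hr (hgW.1 hq) rfl
    have := (Prod.ext_iff.1 e1).2
    have := (Prod.ext_iff.1 e2).2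
    omega
  · have hhW := Finset.mem_powersetCard.1 (hH₁edges hh)
    by_cases h1 : ((r : ℕ), (1 : ℕ)) ∈ h
    · rw [image_swap_of_mem h1] at hgeq
      have key : ∀ s : ℕ, ((r : ℕ), s) ∈ g → s = 2 * j - 1 := by
        intro s hs
        rw [hgeq, Finset.mem_insert] at hs
        rcases hs with hs | hs
        · exact (Prod.ext_iff.1 hs).2
        · obtain ⟨hs1, hs2⟩ := Finset.mem_erase.1 hs
          exact absurd (mem_W'_row hr (hhW.1 hs2) rfl) hs1
      have := key p hp
      have := key q hq
      omega
    · rw [image_swap_of_notMem h1] at hgeq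
      subst hgeq
      have e1 := mem_W'_row hr (hhW.1 hp) rfl
      have e2 := mem_W'_row hr (hhW.1 hq) rfl
      have := (Prod.ext_iff.1 e1).2
      have := (Prod.ext_iff.1 e2).2
      omega
  · obtain ⟨m', hcons, hvn, hvm, hrow2, hall⟩ := gadget_analyze hr (n := 4 * j - 2)
      (by omega) hcTe hrTe (by rw [show 4 * j - 2 - 1 = 4 * j - 3 from by omega,
        show 4 * j - 2 + 1 = 4 * j - 1 from by omega]; exact h)
    have hnm : (4 * j - 2 : ℕ) ≠ m' := by omega
    have hp' : p = 4 * j - 2 ∨ p = m' := by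
      rcases hrow2 _ hp rfl with h' | h'
      · exact Or.inl (Prod.ext_iff.1 h').2
      · exact Or.inr (Prod.ext_iff.1 h').2
    have hq' : q = 4 * j - 2 ∨ q = m' := by
      rcases hrow2 _ hq rfl with h' | h'
      · exact Or.inl (Prod.ext_iff.1 h').2
      · exact Or.inr (Prod.ext_iff.1 h').2
    refine ⟨4 * j - 2, m', hcons, by omega, Or.inl ⟨by omega, ?_⟩⟩
    intro z hz
    rcases hall z hz with h' | h'
    · rcases hrow2 z hz h' with h'' | h''
      · exact Or.inl h''
      · exact Or.inr (Or.inl h'')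
    · exact Or.inr (Or.inr h')
  · obtain ⟨m', hcons, hvn, hvm, hrow2, hall⟩ := gadget_analyze hr (n := 4 * j)
      (by omega) hc0e hr0e h
    have hnm : (4 * j : ℕ) ≠ m' := by omega
    have hp' : p = 4 * j ∨ p = m' := by
      rcases hrow2 _ hp rfl with h' | h'
      · exact Or.inl (Prod.ext_iff.1 h').2
      · exact Or.inr (Prod.ext_iff.1 h').2
    have hq' : q = 4 * j ∨ q = m' := by
      rcases hrow2 _ hq rfl with h' | h'
      · exact Or.inl (Prod.ext_iff.1 h').2
      · exact Or.inr (Prod.ext_iff.1 h').2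
    refine ⟨4 * j, m', hcons, by omega, Or.inr ⟨by omega, ?_⟩⟩
    intro z hz
    rcases hall z hz with h' | h'
    · rcases hrow2 z hz h' with h'' | h''
      · exact Or.inl h''
      · exact Or.inr (Or.inl h'')
    · exact Or.inr (Or.inr h')

end Classify

end Glue

lemma pair_eta {z : ℕ × ℕ} {r : ℕ} (h : z.1 = r) : z = ((r : ℕ), z.2) := by
  rw [← h]

lemma transfer_oneRow {r k T₁ : ℕ} {H₁ : Finset (Finset (ℕ × ℕ))} {e : ℕ → Finset (ℕ × ℕ)}
    (hr : 3 ≤ r) (hk : 2 ≤ k)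
    (hH₁edges : H₁ ⊆ (Astar k (r - 1) ∪ {((r : ℕ), (1 : ℕ))}).powersetCard r)
    (hsT : e T₁ ⊆ Astar k (r - 1) ∪ {((r : ℕ), (1 : ℕ))}) (hcT : (e T₁).card = r)
    (hvT : ((r : ℕ), (1 : ℕ)) ∈ e T₁)
    (hs0 : e 0 ⊆ Astar k (r - 1) ∪ {((r : ℕ), (1 : ℕ))}) (hc0 : (e 0).card = r)
    (hv0 : ((r : ℕ), (1 : ℕ)) ∈ e 0)
    {f : Finset (ℕ × ℕ)} {x : ℕ × ℕ} (hxr : x.1 = r) (hxb : x.2 ≤ 4 * k - 3)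
    (honly : ∀ z ∈ f, z.1 = r → z = x) (hodd : Odd x.2)
    {g : Finset (ℕ × ℕ)} (hgf : g ⊆ f) :
    (g ∈ glueH r k T₁ H₁ e ∧ g ≠ e 0) ↔
      ((g.image fun z => if z = ((r : ℕ), x.2) then ((r : ℕ), (1 : ℕ)) else z) ∈ H₁ ∧
       (g.image fun z => if z = ((r : ℕ), x.2) then ((r : ℕ), (1 : ℕ)) else z) ≠ e 0) := by
  by_cases hxg : x ∈ g
  · have hxg' : ((r : ℕ), x.2) ∈ g := by rw [← pair_eta hxr]; exact hxg
    have himg : (g.image fun z => if z = ((r : ℕ), x.2) then ((r : ℕ), (1 : ℕ)) else z)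
        = insert ((r : ℕ), (1 : ℕ)) (g.erase ((r : ℕ), x.2)) := image_swap_of_mem hxg'
    have hgerase : g.erase ((r : ℕ), x.2) = g.erase x := by rw [← pair_eta hxr]
    have herow : ∀ z ∈ g.erase x, z.1 ≠ r := by
      intro z hz
      obtain ⟨hz1, hz2⟩ := Finset.mem_erase.1 hz
      intro hzr
      exact hz1 (honly z (hgf hz2) hzr)
    constructor
    · rintro ⟨hgH, hg0⟩
      obtain ⟨-, h, hhH, hh0, hh1, hgeq⟩ := glue_oneRow hr hH₁edges hsT hcT hvT hs0 hc0 hv0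
        hgH hg0 hxg' (fun z hz hzr => by rw [← pair_eta hxr]; exact honly z (hgf hz) hzr)
      obtain ⟨hhc, hhrow, hhin⟩ := erase_facts hr (Finset.mem_powersetCard.1 (hH₁edges hhH)).1
        (Finset.mem_powersetCard.1 (hH₁edges hhH)).2 hh1
      have hxnoth : ((r : ℕ), x.2) ∉ h.erase ((r : ℕ), (1 : ℕ)) := by
        intro hmem
        exact hhrow _ hmem rfl
      have hgex : g.erase ((r : ℕ), x.2) = h.erase ((r : ℕ), (1 : ℕ)) := by
        rw [hgeq, Finset.erase_insert hxnoth]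
      rw [himg, hgex, hhin]
      exact ⟨hhH, hh0⟩
    · rintro ⟨hgH, hg0⟩
      rw [himg, hgerase] at hgH hg0
      have h1mem : ((r : ℕ), (1 : ℕ)) ∉ g.erase x := fun hmem => (herow _ hmem) rfl
      have hgback : g = insert ((r : ℕ), x.2)
          ((insert ((r : ℕ), (1 : ℕ)) (g.erase x)).erase ((r : ℕ), (1 : ℕ))) := by
        rw [Finset.erase_insert h1mem, ← pair_eta hxr, Finset.insert_erase hxg]
      constructor
      · rw [hgback]
        exact copy_mem_glue hk hgH hg0 (Finset.mem_insert_self _ _) hodd hxb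
      · by_cases hm1 : x.2 = 1
        · have hx1 : x = ((r : ℕ), (1 : ℕ)) := by rw [pair_eta hxr, hm1]
          have hins : insert ((r : ℕ), (1 : ℕ)) (g.erase x) = g := by
            rw [← hx1]; exact Finset.insert_erase hxg
          rw [← hins]
          exact hg0
        · intro hce
          apply hm1
          have h1g : ((r : ℕ), (1 : ℕ)) ∈ g := hce ▸ hv0
          have hx1 := honly _ (hgf h1g) rfl
          rw [pair_eta hxr] at hx1
          exact ((Prod.ext_iff.1 hx1).2).symm
  · have hxg' : ((r : ℕ), x.2) ∉ g := by rw [← pair_eta hxr]; exact hxg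
    rw [image_swap_of_notMem hxg']
    constructor
    · rintro ⟨hgH, hg0⟩
      refine ⟨glue_zeroRow hr hH₁edges hsT hcT hvT hs0 hc0 hv0 hgH ?_, hg0⟩
      intro z hz hzr
      exact hxg (honly z (hgf hz) hzr ▸ hz)
    · rintro ⟨hgH, hg0⟩
      exact ⟨H1_subset_glue hgH, hg0⟩

/-- under the hypotheses of the gluing construction, the
`F_r`-bootstrap process on the complete `r`-graph on `V(H) = A_r^*` with
initially infected graph `H \ {e₀}` is stationary. -/
theorem stmt10 (r k T₁ : ℕ) (hr : 3 ≤ r) (hk : 2 ≤ k) (hT₁ : 2 ≤ T₁)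
    (H₁ : Finset (Finset (ℕ × ℕ))) (e : ℕ → Finset (ℕ × ℕ))
    (hH₁edges : H₁ ⊆ (Astar k (r - 1) ∪ {((r : ℕ), (1 : ℕ))}).powersetCard r)
    (hH₁vertices : ∀ x ∈ Astar k (r - 1) ∪ {((r : ℕ), (1 : ℕ))}, ∃ f ∈ H₁, x ∈ f)
    (hseq : IsSequential r (Astar k (r - 1) ∪ {((r : ℕ), (1 : ℕ))}) H₁ T₁ e)
    (hv : ∀ i ≤ T₁, ((r : ℕ), (1 : ℕ)) ∈ e i) :
    Stationary r (Astar k r) (glueH r k T₁ H₁ e \ {e 0}) := by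
  classical
  obtain ⟨he0, hecard, hInf, hstat, -⟩ := hseq
  have hsT : e T₁ ⊆ Astar k (r - 1) ∪ {((r : ℕ), (1 : ℕ))} := (hecard T₁ le_rfl).1
  have hcT : (e T₁).card = r := (hecard T₁ le_rfl).2
  have hs0 : e 0 ⊆ Astar k (r - 1) ∪ {((r : ℕ), (1 : ℕ))} := (hecard 0 (by omega)).1
  have hc0 : (e 0).card = r := (hecard 0 (by omega)).2
  have hvT : ((r : ℕ), (1 : ℕ)) ∈ e T₁ := hv T₁ le_rfl
  have hv0 : ((r : ℕ), (1 : ℕ)) ∈ e 0 := hv 0 (by omega)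
  have heT : e T₁ ∉ H₁ := by
    intro h
    exact (hInf.1 T₁ (by omega) le_rfl).1 (subset_bootIter _ _ _ _ h)
  obtain ⟨hcTe, hrTe, hiTe⟩ := erase_facts hr hsT hcT hvT
  obtain ⟨hc0e, hr0e, hi0e⟩ := erase_facts hr hs0 hc0 hv0
  apply stationary_of
  intro f hf e' hcontra
  obtain ⟨hfW, hfcard⟩ := Finset.mem_powersetCard.1 hf
  -- helper: two distinct missing r-subsets of f give a contradiction
  have two_miss : ∀ g₁ g₂ : Finset (ℕ × ℕ), g₁ ⊆ f → g₂ ⊆ f → g₁.card = r →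
      g₂.card = r → g₁ ≠ g₂ → g₁ ∉ glueH r k T₁ H₁ e \ {e 0} →
      g₂ ∉ glueH r k T₁ H₁ e \ {e 0} → False := by
    intro g₁ g₂ hs1 hs2 hcc1 hcc2 hne hn1 hn2
    have m1 : g₁ ∈ f.powersetCard r \ (glueH r k T₁ H₁ e \ {e 0}) :=
      Finset.mem_sdiff.2 ⟨Finset.mem_powersetCard.2 ⟨hs1, hcc1⟩, hn1⟩
    have m2 : g₂ ∈ f.powersetCard r \ (glueH r k T₁ H₁ e \ {e 0}) :=
      Finset.mem_sdiff.2 ⟨Finset.mem_powersetCard.2 ⟨hs2, hcc2⟩, hn2⟩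
    rw [hcontra, Finset.mem_singleton] at m1 m2
    exact hne (m1.trans m2.symm)
  have hnotG : ∀ g : Finset (ℕ × ℕ), g ∉ glueH r k T₁ H₁ e \ {e 0} ↔
      ¬(g ∈ glueH r k T₁ H₁ e ∧ g ≠ e 0) := by
    intro g
    rw [Finset.mem_sdiff, Finset.mem_singleton]
  -- the set of row-r vertices of f
  set S := f.filter (fun z => z.1 = r) with hSdef
  have hmemS : ∀ z, z ∈ S ↔ z ∈ f ∧ z.1 = r := by
    intro z; rw [hSdef, Finset.mem_filter]
  -- general adjacency fact for edges of the glued graph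
  have adj : ∀ a b : ℕ × ℕ, a.1 = r → b.1 = r → a ≠ b →
      ∀ g : Finset (ℕ × ℕ), g ∈ glueH r k T₁ H₁ e → a ∈ g → b ∈ g →
      (a.2 + 1 = b.2 ∨ b.2 + 1 = a.2) := by
    intro a b har hbr hab g hg hag hbg
    have hab2 : a.2 ≠ b.2 := fun h => hab (by rw [pair_eta har, pair_eta hbr, h])
    obtain ⟨n, m, hcons, hpq, -⟩ := glue_twoRow hr hH₁edges hsT hcT hvT hs0 hc0 hv0 hg
      (by rw [← pair_eta har]; exact hag) (by rw [← pair_eta hbr]; exact hbg) hab2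
    omega
  have hcard_er : ∀ a ∈ f, (f.erase a).card = r := by
    intro a ha
    rw [Finset.card_erase_of_mem ha, hfcard]
    omega
  have hne_er : ∀ a b : ℕ × ℕ, a ∈ f → a ≠ b → f.erase a ≠ f.erase b := by
    intro a b ha hab h
    exact Finset.notMem_erase a f
      (h ▸ (Finset.mem_erase.2 ⟨hab, ha⟩ : a ∈ f.erase b))
  by_cases hS3 : 3 ≤ S.card
  · -- at least three row-r vertices
    obtain ⟨x, hx, y, hy, z, hz, hxy, hxz, hyz⟩ := Finset.two_lt_card.1 (show 2 < S.card by omega)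
    obtain ⟨hxf, hxr⟩ := (hmemS x).1 hx
    obtain ⟨hyf, hyr⟩ := (hmemS y).1 hy
    obtain ⟨hzf, hzr⟩ := (hmemS z).1 hz
    have hxy2 : x.2 ≠ y.2 := fun h => hxy (by rw [pair_eta hxr, pair_eta hyr, h])
    have hxz2 : x.2 ≠ z.2 := fun h => hxz (by rw [pair_eta hxr, pair_eta hzr, h])
    have hyz2 : y.2 ≠ z.2 := fun h => hyz (by rw [pair_eta hyr, pair_eta hzr, h])
    -- no edge of the glued graph contains three row-r vertices
    have noThree : ∀ g : Finset (ℕ × ℕ), g ∈ glueH r k T₁ H₁ e →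
        ¬ (x ∈ g ∧ y ∈ g ∧ z ∈ g) := by
      rintro g hg ⟨hxg, hyg, hzg⟩
      obtain ⟨n, m, hcons, hpq, hbr⟩ := glue_twoRow hr hH₁edges hsT hcT hvT hs0 hc0 hv0 hg
        (by rw [← pair_eta hxr]; exact hxg) (by rw [← pair_eta hyr]; exact hyg) hxy2
      have hz2 : z.2 = n ∨ z.2 = m := by
        rcases hbr with ⟨-, hsub⟩ | ⟨-, hsub⟩ <;>
        · rcases hsub z hzg with h' | h' | h'
          · exact Or.inl (by rw [pair_eta hzr] at h'; exact (Prod.ext_iff.1 h').2)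
          · exact Or.inr (by rw [pair_eta hzr] at h'; exact (Prod.ext_iff.1 h').2)
          · first
            | exact absurd hzr (hrTe z h')
            | exact absurd hzr (hr0e z h')
      omega
    -- a vertex of f outside {x, y, z}
    have h3 : ({x, y, z} : Finset (ℕ × ℕ)).card ≤ 3 := by
      have a1 := Finset.card_insert_le x ({y, z} : Finset (ℕ × ℕ))
      have a2 := Finset.card_insert_le y ({z} : Finset (ℕ × ℕ))
      simp only [Finset.card_singleton] at a2
      omega
    have hsd : 0 < (f \ ({x, y, z} : Finset (ℕ × ℕ))).card := by
      have := Finset.card_le_card_sdiff_add_card (s := f) (t := ({x, y, z} : Finset (ℕ × ℕ)))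
      omega
    obtain ⟨v₀, hv₀⟩ := Finset.card_pos.1 hsd
    obtain ⟨hv₀f, hv₀n⟩ := Finset.mem_sdiff.1 hv₀
    simp only [Finset.mem_insert, Finset.mem_singleton, not_or] at hv₀n
    obtain ⟨hv₀x, hv₀y, hv₀z⟩ := hv₀n
    have hxm1 : x ∈ f.erase v₀ := Finset.mem_erase.2 ⟨fun h => hv₀x h.symm, hxf⟩
    have hym1 : y ∈ f.erase v₀ := Finset.mem_erase.2 ⟨fun h => hv₀y h.symm, hyf⟩
    have hzm1 : z ∈ f.erase v₀ := Finset.mem_erase.2 ⟨fun h => hv₀z h.symm, hzf⟩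
    have hmiss1 : f.erase v₀ ∉ glueH r k T₁ H₁ e \ {e 0} := by
      intro hmem
      exact noThree _ (Finset.mem_sdiff.1 hmem).1 ⟨hxm1, hym1, hzm1⟩
    by_cases hmx : f.erase x ∈ glueH r k T₁ H₁ e \ {e 0}
    · by_cases hmy : f.erase y ∈ glueH r k T₁ H₁ e \ {e 0}
      · by_cases hmz : f.erase z ∈ glueH r k T₁ H₁ e \ {e 0}
        · -- all three pair-subsets infected: pairwise adjacent indices, impossible
          have a1 := adj y z hyr hzr hyz _ (Finset.mem_sdiff.1 hmx).1
            (Finset.mem_erase.2 ⟨fun h => hxy h.symm, hyf⟩)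
            (Finset.mem_erase.2 ⟨fun h => hxz h.symm, hzf⟩)
          have a2 := adj x z hxr hzr hxz _ (Finset.mem_sdiff.1 hmy).1
            (Finset.mem_erase.2 ⟨hxy, hxf⟩)
            (Finset.mem_erase.2 ⟨fun h => hyz h.symm, hzf⟩)
          have a3 := adj x y hxr hyr hxy _ (Finset.mem_sdiff.1 hmz).1
            (Finset.mem_erase.2 ⟨hxz, hxf⟩)
            (Finset.mem_erase.2 ⟨hyz, hyf⟩)
          omega
        · exact two_miss _ _ (Finset.erase_subset _ _) (Finset.erase_subset _ _)
            (hcard_er v₀ hv₀f) (hcard_er z hzf)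
            (hne_er v₀ z hv₀f (fun h => hv₀z h)) hmiss1 hmz
      · exact two_miss _ _ (Finset.erase_subset _ _) (Finset.erase_subset _ _)
          (hcard_er v₀ hv₀f) (hcard_er y hyf)
          (hne_er v₀ y hv₀f (fun h => hv₀y h)) hmiss1 hmy
    · exact two_miss _ _ (Finset.erase_subset _ _) (Finset.erase_subset _ _)
        (hcard_er v₀ hv₀f) (hcard_er x hxf)
        (hne_er v₀ x hv₀f (fun h => hv₀x h)) hmiss1 hmx
  · by_cases hS2 : S.card = 2
    · obtain ⟨x, y, hxy, hSxy⟩ := Finset.card_eq_two.1 hS2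
      have hxS : x ∈ S := by rw [hSxy]; exact Finset.mem_insert_self _ _
      have hyS : y ∈ S := by
        rw [hSxy]; exact Finset.mem_insert_of_mem (Finset.mem_singleton_self _)
      obtain ⟨hxf, hxr⟩ := (hmemS x).1 hxS
      obtain ⟨hyf, hyr⟩ := (hmemS y).1 hyS
      have honly2 : ∀ z ∈ f, z.1 = r → z = x ∨ z = y := by
        intro z hz hzr
        have hzS : z ∈ S := (hmemS z).2 ⟨hz, hzr⟩
        rw [hSxy, Finset.mem_insert, Finset.mem_singleton] at hzS
        exact hzS
      have missOne : ∀ a b : ℕ × ℕ, a ∈ f → b ∈ f → a.1 = r → b.1 = r → a ≠ b →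
          (∀ z ∈ f, z.1 = r → z = a ∨ z = b) → Even a.2 →
          f.erase b ∉ glueH r k T₁ H₁ e \ {e 0} := by
        intro a b haf hbf har hbr hab hon hae hmem
        obtain ⟨hm1, hm2⟩ := Finset.mem_sdiff.1 hmem
        rw [Finset.mem_singleton] at hm2
        have hae' : ((r : ℕ), a.2) ∈ f.erase b := by
          rw [← pair_eta har]; exact Finset.mem_erase.2 ⟨hab, haf⟩
        obtain ⟨hodd, -⟩ := glue_oneRow hr hH₁edges hsT hcT hvT hs0 hc0 hv0 hm1 hm2 hae'
          (fun z hz hzr => by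
            rw [← pair_eta har]
            rcases hon z (Finset.erase_subset _ _ hz) hzr with h | h
            · exact h
            · exact absurd (h ▸ hz) (Finset.notMem_erase b f))
        rw [Nat.even_iff] at hae
        rw [Nat.odd_iff] at hodd
        omega
      have mixed : ∀ a b : ℕ × ℕ, a ∈ f → b ∈ f → a.1 = r → b.1 = r → a ≠ b →
          (∀ z ∈ f, z.1 = r → z = a ∨ z = b) → Even a.2 → Odd b.2 → False := by
        intro a b haf hbf har hbr hab hon hae hbo
        have hab2 : a.2 ≠ b.2 := fun h => hab (by rw [pair_eta har, pair_eta hbr, h])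
        have hmA : f.erase b ∉ glueH r k T₁ H₁ e \ {e 0} :=
          missOne a b haf hbf har hbr hab hon hae
        set fm := (f.erase a).erase b with hfmdef
        have hfm_mem : ∀ v ∈ fm, v ≠ a ∧ v ≠ b ∧ v ∈ f := by
          intro v hv
          obtain ⟨hv1, hv2⟩ := Finset.mem_erase.1 hv
          obtain ⟨hv3, hv4⟩ := Finset.mem_erase.1 hv2
          exact ⟨hv3, hv1, hv4⟩
        have hfm_c : fm.card = r - 1 := by
          rw [hfmdef, Finset.card_erase_of_mem
            (Finset.mem_erase.2 ⟨fun h => hab h.symm, hbf⟩),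
            Finset.card_erase_of_mem haf, hfcard]
          omega
        by_cases hallin : ∀ v ∈ fm, f.erase v ∈ glueH r k T₁ H₁ e \ {e 0}
        · obtain ⟨v₁, hv₁, v₂, hv₂, hv12⟩ :=
            Finset.one_lt_card.1 (show 1 < fm.card by omega)
          have hstruct : ∀ v ∈ fm, ∀ zz ∈ f.erase v, zz = a ∨ zz = b ∨
              (a.2 % 4 = 2 ∧ zz ∈ (e T₁).erase ((r : ℕ), (1 : ℕ))) ∨
              (a.2 % 4 = 0 ∧ zz ∈ (e 0).erase ((r : ℕ), (1 : ℕ))) := by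
            intro v hv
            obtain ⟨hva, hvb, hvf⟩ := hfm_mem v hv
            obtain ⟨hg1, -⟩ := Finset.mem_sdiff.1 (hallin v hv)
            have hav : ((r : ℕ), a.2) ∈ f.erase v := by
              rw [← pair_eta har]
              exact Finset.mem_erase.2 ⟨fun h => hva h.symm, haf⟩
            have hbv : ((r : ℕ), b.2) ∈ f.erase v := by
              rw [← pair_eta hbr]
              exact Finset.mem_erase.2 ⟨fun h => hvb h.symm, hbf⟩
            obtain ⟨n, m, hcons, hpq, hbr2⟩ := glue_twoRow hr hH₁edges hsT hcT hvT hs0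
              hc0 hv0 hg1 hav hbv hab2
            intro zz hzz
            have hae' : a.2 % 2 = 0 := Nat.even_iff.1 hae
            have hbo' : b.2 % 2 = 1 := Nat.odd_iff.1 hbo
            rcases hbr2 with ⟨hn4, hsub⟩ | ⟨hn4, hsub⟩
            · have han : a.2 = n ∧ b.2 = m := by omega
              rcases hsub zz hzz with h | h | h
              · exact Or.inl (by rw [h, pair_eta har, han.1])
              · exact Or.inr (Or.inl (by rw [h, pair_eta hbr, han.2]))
              · exact Or.inr (Or.inr (Or.inl ⟨by omega, h⟩))
            · have han : a.2 = n ∧ b.2 = m := by omega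
              rcases hsub zz hzz with h | h | h
              · exact Or.inl (by rw [h, pair_eta har, han.1])
              · exact Or.inr (Or.inl (by rw [h, pair_eta hbr, han.2]))
              · exact Or.inr (Or.inr (Or.inr ⟨by omega, h⟩))
          have finisher : ∀ s : Finset (ℕ × ℕ), ((r : ℕ), (1 : ℕ)) ∈ s →
              fm = s.erase ((r : ℕ), (1 : ℕ)) →
              f.erase a ∈ glueH r k T₁ H₁ e \ {e 0} → s ∈ H₁ ∧ s ≠ e 0 := by
            intro s hs1 hfs hmem
            obtain ⟨hm1, hm2⟩ := Finset.mem_sdiff.1 hmem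
            rw [Finset.mem_singleton] at hm2
            have hbe : ((r : ℕ), b.2) ∈ f.erase a := by
              rw [← pair_eta hbr]
              exact Finset.mem_erase.2 ⟨fun h => hab h.symm, hbf⟩
            obtain ⟨-, h, hhH, hh0, hh1, hgeq⟩ := glue_oneRow hr hH₁edges hsT hcT hvT
              hs0 hc0 hv0 hm1 hm2 hbe (fun z hz hzr => by
                rw [← pair_eta hbr]
                rcases hon z (Finset.erase_subset _ _ hz) hzr with h' | h'
                · exact absurd (h' ▸ hz) (Finset.notMem_erase a f)
                · exact h')
            obtain ⟨-, hhrow, -⟩ := erase_facts hr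
              (Finset.mem_powersetCard.1 (hH₁edges hhH)).1
              (Finset.mem_powersetCard.1 (hH₁edges hhH)).2 hh1
            have hbnot : ((r : ℕ), b.2) ∉ h.erase ((r : ℕ), (1 : ℕ)) :=
              fun hm => hhrow _ hm rfl
            have h2 : h.erase ((r : ℕ), (1 : ℕ)) = fm := by
              have h3 : (f.erase a).erase ((r : ℕ), b.2) = h.erase ((r : ℕ), (1 : ℕ)) := by
                rw [hgeq, Finset.erase_insert hbnot]
              rw [← h3, hfmdef, ← pair_eta hbr]
            have hhs : h = s := by
              rw [← Finset.insert_erase hh1, h2, hfs, Finset.insert_erase hs1]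
            exact ⟨hhs ▸ hhH, hhs ▸ hh0⟩
          have hfm_sub : ∀ em : Finset (ℕ × ℕ),
              (∀ v ∈ fm, ∀ zz ∈ f.erase v, zz = a ∨ zz = b ∨ zz ∈ em) → fm ⊆ em := by
            intro em hsub v' hv'
            obtain ⟨hv'a, hv'b, hv'f⟩ := hfm_mem v' hv'
            have hne2 : v' ≠ v₁ ∨ v' ≠ v₂ := by
              by_cases h : v' = v₁
              · exact Or.inr (fun h2 => hv12 (h ▸ h2 ▸ rfl))
              · exact Or.inl h
            rcases hne2 with h | h
            · rcases hsub v₁ hv₁ v' (Finset.mem_erase.2 ⟨h, hv'f⟩) with h' | h' | h'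
              · exact absurd h' hv'a
              · exact absurd h' hv'b
              · exact h'
            · rcases hsub v₂ hv₂ v' (Finset.mem_erase.2 ⟨h, hv'f⟩) with h' | h' | h'
              · exact absurd h' hv'a
              · exact absurd h' hv'b
              · exact h'
          have h4 : a.2 % 4 = 2 ∨ a.2 % 4 = 0 := by
            have := Nat.even_iff.1 hae
            omega
          rcases h4 with h4 | h4
          · have hfm_em : fm ⊆ (e T₁).erase ((r : ℕ), (1 : ℕ)) := by
              apply hfm_sub
              intro v hv zz hzz
              rcases hstruct v hv zz hzz with h' | h' | ⟨h4', h'⟩ | ⟨h4', h'⟩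
              · exact Or.inl h'
              · exact Or.inr (Or.inl h')
              · exact Or.inr (Or.inr h')
              · omega
            have hfm_eq : fm = (e T₁).erase ((r : ℕ), (1 : ℕ)) :=
              Finset.eq_of_subset_of_card_le hfm_em (by omega)
            have hmB : f.erase a ∉ glueH r k T₁ H₁ e \ {e 0} := by
              intro hmem
              exact heT (finisher (e T₁) hvT (by rw [hfm_eq]) hmem).1
            exact two_miss _ _ (Finset.erase_subset _ _) (Finset.erase_subset _ _)
              (hcard_er b hbf) (hcard_er a haf)
              (hne_er b a hbf (fun h => hab h.symm)) hmA hmB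
          · have hfm_em : fm ⊆ (e 0).erase ((r : ℕ), (1 : ℕ)) := by
              apply hfm_sub
              intro v hv zz hzz
              rcases hstruct v hv zz hzz with h' | h' | ⟨h4', h'⟩ | ⟨h4', h'⟩
              · exact Or.inl h'
              · exact Or.inr (Or.inl h')
              · omega
              · exact Or.inr (Or.inr h')
            have hfm_eq : fm = (e 0).erase ((r : ℕ), (1 : ℕ)) :=
              Finset.eq_of_subset_of_card_le hfm_em (by omega)
            have hmB : f.erase a ∉ glueH r k T₁ H₁ e \ {e 0} := by
              intro hmem
              exact (finisher (e 0) hv0 (by rw [hfm_eq]) hmem).2 rfl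
            exact two_miss _ _ (Finset.erase_subset _ _) (Finset.erase_subset _ _)
              (hcard_er b hbf) (hcard_er a haf)
              (hne_er b a hbf (fun h => hab h.symm)) hmA hmB
        · push_neg at hallin
          obtain ⟨v, hv, hvnot⟩ := hallin
          obtain ⟨hva, hvb, hvf⟩ := hfm_mem v hv
          exact two_miss _ _ (Finset.erase_subset _ _) (Finset.erase_subset _ _)
            (hcard_er b hbf) (hcard_er v hvf)
            (hne_er b v hbf (fun h => hvb h.symm)) hmA hvnot
      have hxy2 : x.2 ≠ y.2 := fun h => hxy (by rw [pair_eta hxr, pair_eta hyr, h])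
      rcases Nat.even_or_odd x.2 with hex | hox
      · rcases Nat.even_or_odd y.2 with hey | hoy
        · exact two_miss _ _ (Finset.erase_subset _ _) (Finset.erase_subset _ _)
            (hcard_er y hyf) (hcard_er x hxf) (hne_er y x hyf (fun h => hxy h.symm))
            (missOne x y hxf hyf hxr hyr hxy honly2 hex)
            (missOne y x hyf hxf hyr hxr (fun h => hxy h.symm)
              (fun z hz hzr => (honly2 z hz hzr).symm) hey)
        · exact mixed x y hxf hyf hxr hyr hxy honly2 hex hoy
      · rcases Nat.even_or_odd y.2 with hey | hoy
        · exact mixed y x hyf hxf hyr hxr (fun h => hxy h.symm)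
            (fun z hz hzr => (honly2 z hz hzr).symm) hey hox
        · -- both odd: no glued edge contains the pair {x, y}
          have hc1 : 1 < ((f.erase x).erase y).card := by
            rw [Finset.card_erase_of_mem (Finset.mem_erase.2 ⟨fun h => hxy h.symm, hyf⟩),
              Finset.card_erase_of_mem hxf, hfcard]
            omega
          obtain ⟨v₁, hv₁, v₂, hv₂, hv12⟩ := Finset.one_lt_card.1 hc1
          have key : ∀ v ∈ (f.erase x).erase y,
              f.erase v ∉ glueH r k T₁ H₁ e \ {e 0} := by
            intro v hvm hmem
            obtain ⟨hvb, hv2⟩ := Finset.mem_erase.1 hvm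
            obtain ⟨hva, hvf⟩ := Finset.mem_erase.1 hv2
            obtain ⟨hm1, -⟩ := Finset.mem_sdiff.1 hmem
            have hxv : ((r : ℕ), x.2) ∈ f.erase v := by
              rw [← pair_eta hxr]
              exact Finset.mem_erase.2 ⟨fun h => hva h.symm, hxf⟩
            have hyv : ((r : ℕ), y.2) ∈ f.erase v := by
              rw [← pair_eta hyr]
              exact Finset.mem_erase.2 ⟨fun h => hvb h.symm, hyf⟩
            obtain ⟨n, m, hcons, hpq, hbr2⟩ := glue_twoRow hr hH₁edges hsT hcT hvT hs0
              hc0 hv0 hm1 hxv hyv hxy2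
            have hn2 : n % 4 = 2 ∨ n % 4 = 0 := by
              rcases hbr2 with ⟨h', -⟩ | ⟨h', -⟩
              · exact Or.inl h'
              · exact Or.inr h'
            have hx2 := Nat.odd_iff.1 hox
            have hy2 := Nat.odd_iff.1 hoy
            omega
          have hv₁f : v₁ ∈ f :=
            Finset.erase_subset _ _ (Finset.erase_subset _ _ hv₁)
          have hv₂f : v₂ ∈ f :=
            Finset.erase_subset _ _ (Finset.erase_subset _ _ hv₂)
          exact two_miss _ _ (Finset.erase_subset _ _) (Finset.erase_subset _ _)
            (hcard_er v₁ hv₁f) (hcard_er v₂ hv₂f) (hne_er v₁ v₂ hv₁f hv12)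
            (key v₁ hv₁) (key v₂ hv₂)
    · by_cases hS1 : S.card = 1
      · obtain ⟨x, hSx⟩ := Finset.card_eq_one.1 hS1
        have hxS : x ∈ S := hSx ▸ Finset.mem_singleton_self x
        obtain ⟨hxf, hxr⟩ := (hmemS x).1 hxS
        have honly : ∀ z ∈ f, z.1 = r → z = x := by
          intro z hz hzr
          have hzS : z ∈ S := (hmemS z).2 ⟨hz, hzr⟩
          rw [hSx] at hzS
          exact Finset.mem_singleton.1 hzS
        have hxA := mem_Astar.1 (hfW hxf)
        rcases Nat.even_or_odd x.2 with hpar | hpar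
        · -- x.2 even : any r-subset of f containing x is missing
          have hc1 : 1 < (f.erase x).card := by
            rw [Finset.card_erase_of_mem hxf, hfcard]; omega
          obtain ⟨v₁, hv₁, v₂, hv₂, hv12⟩ := Finset.one_lt_card.1 hc1
          obtain ⟨hv₁x, hv₁f⟩ := Finset.mem_erase.1 hv₁
          obtain ⟨hv₂x, hv₂f⟩ := Finset.mem_erase.1 hv₂
          have key : ∀ v : ℕ × ℕ, v ∈ f → v ≠ x →
              f.erase v ∉ glueH r k T₁ H₁ e \ {e 0} := by
            intro v hvf hvx hmem
            obtain ⟨hmem1, hmem2⟩ := Finset.mem_sdiff.1 hmem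
            rw [Finset.mem_singleton] at hmem2
            have hxe : ((r : ℕ), x.2) ∈ f.erase v := by
              rw [← pair_eta hxr]
              exact Finset.mem_erase.2 ⟨fun h => hvx h.symm, hxf⟩
            obtain ⟨hodd, -⟩ := glue_oneRow hr hH₁edges hsT hcT hvT hs0 hc0 hv0 hmem1
              hmem2 hxe (fun z hz hzr => by
                rw [← pair_eta hxr]
                exact honly z (Finset.erase_subset _ _ hz) hzr)
            rw [Nat.even_iff] at hpar
            rw [Nat.odd_iff] at hodd
            omega
          exact two_miss _ _ (Finset.erase_subset _ _) (Finset.erase_subset _ _)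
            (hcard_er v₁ hv₁f) (hcard_er v₂ hv₂f) (hne_er v₁ v₂ hv₁f hv12)
            (key v₁ hv₁f hv₁x) (key v₂ hv₂f hv₂x)
        · -- x.2 odd : transfer to the stationarity of H₁ \ {e 0}
          set σ : ℕ × ℕ → ℕ × ℕ :=
            fun z => if z = ((r : ℕ), x.2) then ((r : ℕ), (1 : ℕ)) else z with hσdef
          set τ : ℕ × ℕ → ℕ × ℕ :=
            fun z => if z = ((r : ℕ), (1 : ℕ)) then ((r : ℕ), x.2) else z with hτdef
          have hxg' : ((r : ℕ), x.2) ∈ f := by rw [← pair_eta hxr]; exact hxf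
          have hfrow : ∀ z ∈ f, z ≠ x → z.1 ≠ r := by
            intro z hz hzx hzr
            exact hzx (honly z hz hzr)
          have hts : ∀ z ∈ f, τ (σ z) = z := by
            intro z hz
            by_cases hzx : z = ((r : ℕ), x.2)
            · simp [hσdef, hτdef, hzx]
            · have hzx2 : z ≠ x := fun h => hzx (h.trans (pair_eta hxr))
              have hz1 : z ≠ ((r : ℕ), (1 : ℕ)) := by
                intro h
                exact hfrow z hz hzx2 (by rw [h])
              simp only [hσdef, hτdef, if_neg hzx, if_neg hz1]
          have hst : ∀ b ∈ f.image σ, σ (τ b) = b := by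
            intro b hb
            obtain ⟨c, hc, rfl⟩ := Finset.mem_image.1 hb
            rw [hts c hc]
          have hinjσ : Set.InjOn σ f := by
            intro a ha b hb hE
            rw [← hts a ha, ← hts b hb, hE]
          have himgf : f.image σ = insert ((r : ℕ), (1 : ℕ)) (f.erase x) := by
            rw [hσdef, image_swap_of_mem hxg', ← pair_eta hxr]
          have h1nf : ((r : ℕ), (1 : ℕ)) ∉ f.erase x := by
            intro h
            obtain ⟨h1, h2⟩ := Finset.mem_erase.1 h
            exact hfrow _ h2 h1 rfl
          have hf'c : (f.image σ).card = r + 1 := by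
            rw [himgf, Finset.card_insert_of_notMem h1nf,
              Finset.card_erase_of_mem hxf, hfcard]
            omega
          have hf'W : f.image σ ⊆ Astar k (r - 1) ∪ {((r : ℕ), (1 : ℕ))} := by
            rw [himgf]
            rw [Finset.insert_subset_iff]
            constructor
            · exact Finset.mem_union_right _ (Finset.mem_singleton_self _)
            · intro z hz
              obtain ⟨hz1, hz2⟩ := Finset.mem_erase.1 hz
              apply Finset.mem_union_left
              have hb := mem_Astar.1 (hfW hz2)
              rw [mem_Astar]
              exact ⟨⟨hb.1.1, by have := hfrow z hz2 hz1; omega⟩, hb.2⟩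
          have he'mem : e' ∈ f.powersetCard r \ (glueH r k T₁ H₁ e \ {e 0}) := by
            rw [hcontra]; exact Finset.mem_singleton_self e'
          obtain ⟨he'pc, he'G⟩ := Finset.mem_sdiff.1 he'mem
          obtain ⟨he'f, he'c⟩ := Finset.mem_powersetCard.1 he'pc
          refine stationary_no_f hstat (f := f.image σ)
            (Finset.mem_powersetCard.2 ⟨hf'W, hf'c⟩) (e'.image σ) ?_
          ext g'
          simp only [Finset.mem_singleton]
          constructor
          · intro hg'
            obtain ⟨hg'pc, hg'H⟩ := Finset.mem_sdiff.1 hg'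
            obtain ⟨hg'f', hg'c⟩ := Finset.mem_powersetCard.1 hg'pc
            have hgsub : g'.image τ ⊆ f := by
              intro a ha
              obtain ⟨b, hb, rfl⟩ := Finset.mem_image.1 ha
              obtain ⟨c, hc, rfl⟩ := Finset.mem_image.1 (hg'f' hb)
              rw [hts c hc]
              exact hc
            have hinjτ : Set.InjOn τ g' := by
              intro a ha b hb hE
              rw [← hst a (hg'f' ha), ← hst b (hg'f' hb), hE]
            have hgc : (g'.image τ).card = r := by
              rw [Finset.card_image_of_injOn hinjτ, hg'c]
            have hgimg : (g'.image τ).image σ = g' := by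
              rw [Finset.image_image]
              refine (Finset.image_congr ?_).trans Finset.image_id
              intro b hb
              exact hst b (hg'f' hb)
            have hgnot : g'.image τ ∉ glueH r k T₁ H₁ e \ {e 0} := by
              intro hG
              obtain ⟨h1, h2⟩ := Finset.mem_sdiff.1 hG
              rw [Finset.mem_singleton] at h2
              have htr := (transfer_oneRow hr hk hH₁edges hsT hcT hvT hs0 hc0 hv0 hxr
                (by omega) honly hpar hgsub).1 ⟨h1, h2⟩
              rw [← hσdef] at htr
              rw [hgimg] at htr
              exact hg'H (Finset.mem_sdiff.2 ⟨htr.1, by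
                rw [Finset.mem_singleton]; exact htr.2⟩)
            have hgm : g'.image τ ∈ f.powersetCard r \ (glueH r k T₁ H₁ e \ {e 0}) :=
              Finset.mem_sdiff.2 ⟨Finset.mem_powersetCard.2 ⟨hgsub, hgc⟩, hgnot⟩
            rw [hcontra, Finset.mem_singleton] at hgm
            rw [← hgimg, hgm]
          · intro hg'
            subst hg'
            refine Finset.mem_sdiff.2 ⟨Finset.mem_powersetCard.2
              ⟨?_, ?_⟩, ?_⟩
            · exact Finset.image_subset_image he'f
            · rw [Finset.card_image_of_injOn (hinjσ.mono he'f), he'c]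
            · intro hmem
              obtain ⟨hm1, hm2⟩ := Finset.mem_sdiff.1 hmem
              rw [Finset.mem_singleton] at hm2
              have htr := (transfer_oneRow hr hk hH₁edges hsT hcT hvT hs0 hc0 hv0 hxr
                (by omega) honly hpar he'f).2 (by rw [← hσdef]; exact ⟨hm1, hm2⟩)
              exact he'G (Finset.mem_sdiff.2 ⟨htr.1, by
                rw [Finset.mem_singleton]; exact htr.2⟩)
      · -- no row-r vertices
        have hS0 : S = ∅ := Finset.card_eq_zero.1 (by omega)
        have hrowf : ∀ z ∈ f, z.1 ≠ r := by
          intro z hz hzr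
          have : z ∈ S := (hmemS z).2 ⟨hz, hzr⟩
          rw [hS0] at this
          exact absurd this (Finset.notMem_empty z)
        have hfW' : f ⊆ Astar k (r - 1) ∪ {((r : ℕ), (1 : ℕ))} := by
          intro z hz
          apply Finset.mem_union_left
          have h1 := mem_Astar.1 (hfW hz)
          rw [mem_Astar]
          exact ⟨⟨h1.1.1, by have := hrowf z hz; omega⟩, h1.2⟩
        refine stationary_no_f hstat (f := f)
          (Finset.mem_powersetCard.2 ⟨hfW', hfcard⟩) e' ?_
        rw [← hcontra]
        ext g
        simp only [Finset.mem_sdiff, Finset.mem_powersetCard, Finset.mem_singleton,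
          and_congr_right_iff]
        intro hgf
        constructor
        · intro hg1 hg2
          apply hg1
          refine ⟨glue_zeroRow hr hH₁edges hsT hcT hvT hs0 hc0 hv0 hg2.1 ?_, hg2.2⟩
          intro z hz
          exact hrowf z (hgf.1 hz)
        · intro hg1 hg2
          exact hg1 ⟨H1_subset_glue hg2.1, hg2.2⟩
end
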